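/- arXiv:2401.06691 — 8 statements merged into one kernel-verified Lean document; each statement's English description precedes it below -/
import Mathlib

section
/- Every nonempty word over a totally ordered alphabet admits a unique Chen–Fox–Lyndon factorization: it can be written uniquely as a concatenation a₁a₂⋯a_p of Lyndon words with a₁ ≥_lex a₂ ≥_lex ⋯ ≥_lex a_p. -/
/-!
Existence: starting from the factorization of a word into its letters, repeatedly merge two
adjacent factors `u < v`; this is possible because the concatenation of Lyndon words `u < v` is
again Lyndon.

Uniqueness: the first factor `a₁` of a factorization `a₁ ⋯ aₚ` with Lyndon factors
`a₁ ≥ ⋯ ≥ aₚ` is the longest Lyndon prefix of the word. Indeed, a longer Lyndon prefix has the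
form `b = a₁ ⋯ aᵢ₋₁ c` with `c` a nonempty prefix of some `aᵢ`, `i ≥ 2`, and then
`b < c ≤ aᵢ ≤ a₁ ≤ b`.
-/

/-- A nonempty word `w` over a totally ordered alphabet is Lyndon if it is
lexicographically strictly smaller than each of its proper nonempty suffixes. -/
def IsLyndon {A : Type*} [LinearOrder A] (w : List A) : Prop :=
  w ≠ [] ∧ ∀ u v : List A, u ≠ [] → v ≠ [] → w = u ++ v → List.Lex (· < ·) w v

namespace List

variable {α : Type*} [LinearOrder α] {s t : List α}

-- Core's `List.IsPrefix.le` concerns core's `≤` on lists, not the one of `LinearOrder (List α)`.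
theorem le_of_isPrefix (h : s <+: t) : s ≤ t :=
  not_lt.mp h.le

theorem append_lt_append_of_lt_of_not_isPrefix (h : s < t) (hst : ¬ s <+: t) (s' t' : List α) :
    s ++ s' < t ++ t' := by
  induction h with
  | nil => exact absurd nil_prefix hst
  | rel hab => exact Lex.rel hab
  | cons _ ih => exact Lex.cons (ih fun h => hst (cons_prefix_cons.mpr ⟨rfl, h⟩))

end List

section

open List

namespace IsLyndon

variable {A : Type*} [LinearOrder A] {u v x y : List A}

theorem singleton (a : A) : IsLyndon [a] := by
  refine ⟨cons_ne_nil a [], fun u v hu hv h => ?_⟩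
  rcases append_eq_singleton_iff.mp h.symm with ⟨rfl, -⟩ | ⟨-, rfl⟩
  · exact absurd rfl hu
  · exact absurd rfl hv

theorem le_of_eq_append (hv : IsLyndon v) (h : v = x ++ y) (hy : y ≠ []) : v ≤ y := by
  rcases eq_or_ne x [] with rfl | hx
  · exact le_of_eq h
  · exact le_of_lt (hv.2 x y hx hy h)

theorem append_lt_of_lt (hv : IsLyndon v) (hu : u ≠ []) (huv : u < v) : u ++ v < v := by
  by_cases hp : u <+: v
  · obtain ⟨t, rfl⟩ := hp
    have ht : t ≠ [] := by
      rintro rfl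
      simp at huv
    exact append_left_lt (hv.2 u t hu ht rfl)
  · simpa using append_lt_append_of_lt_of_not_isPrefix huv hp v []

theorem append (hu : IsLyndon u) (hv : IsLyndon v) (huv : u < v) : IsLyndon (u ++ v) := by
  refine ⟨by simp [hu.1], fun x y hx hy h => ?_⟩
  have huv_lt_v : u ++ v < v := hv.append_lt_of_lt hu.1 huv
  rcases append_eq_append_iff.mp h with ⟨e, -, rfl⟩ | ⟨e, rfl, rfl⟩
  · exact huv_lt_v.trans_le (hv.le_of_eq_append rfl hy)
  · rcases eq_or_ne e [] with rfl | he
    · simpa using huv_lt_v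
    · have hxe_not_prefix : ¬ x ++ e <+: e := fun h => hx (by simpa using h.length_le)
      exact append_lt_append_of_lt_of_not_isPrefix (hu.2 x e hx he rfl) hxe_not_prefix v v

/- A prefix `c` of `x₁ ++ x₂ ++ ⋯` is either a prefix of `x₁`, and then `b < c ≤ x₁ ≤ b`, or
`x₁` followed by a shorter suffix of `b`, to which we recurse. -/
theorem not_isPrefix_flatten {b c d : List A} {g : List (List A)} (hb : IsLyndon b)
    (hgb : ∀ x ∈ g, x ≤ b) (hd : d ≠ []) (hc : c ≠ []) (hbdc : b = d ++ c) :
    ¬ c <+: g.flatten := by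
  induction g generalizing c d with
  | nil => simpa using hc
  | cons x g ih =>
    rintro ⟨t, hct⟩
    have hbc : b < c := hb.2 d c hd hc hbdc
    have hxb : x ≤ b := hgb x mem_cons_self
    rw [flatten_cons] at hct
    rcases append_eq_append_iff.mp hct with ⟨e, rfl, -⟩ | ⟨e, rfl, hgt⟩
    · exact (hbc.trans_le ((le_of_isPrefix (prefix_append c e)).trans hxb)).false
    · rcases eq_or_ne e [] with rfl | he
      · exact (hbc.trans_le (by simpa using hxb)).false
      · exact ih (d := d ++ x) (fun y hy => hgb y (mem_cons_of_mem x hy)) (by simp [hd]) he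
          (by rw [hbdc, append_assoc]) ⟨t, hgt.symm⟩

end IsLyndon

variable {A : Type*} [LinearOrder A]

def IsCFLFactorization (w : List A) (f : List (List A)) : Prop :=
  (∀ a ∈ f, IsLyndon a) ∧ f.IsChain (· ≥ ·) ∧ f.flatten = w

namespace IsCFLFactorization

variable {a u w : List A} {f g : List (List A)}

theorem tail (hf : IsCFLFactorization w (a :: f)) : IsCFLFactorization f.flatten f :=
  ⟨fun x hx => hf.1 x (mem_cons_of_mem a hx), hf.2.1.tail, rfl⟩

theorem eq_nil (hf : IsCFLFactorization [] f) : f = [] := by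
  cases f with
  | nil => rfl
  | cons a f =>
    have : a ++ f.flatten = [] := hf.2.2
    exact absurd (append_eq_nil_iff.mp this).1 (hf.1 a mem_cons_self).1

theorem exists_append (hu : IsLyndon u) (hf : IsCFLFactorization w f) :
    ∃ g, IsCFLFactorization (u ++ w) g := by
  induction f generalizing u w with
  | nil =>
    obtain ⟨-, -, rfl⟩ := hf
    exact ⟨[u], by simpa [IsCFLFactorization] using hu, by simp⟩
  | cons v f ih =>
    obtain rfl := hf.2.2
    by_cases huv : u < v
    · simpa using ih (hu.append (hf.1 v mem_cons_self) huv) hf.tail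
    · refine ⟨u :: v :: f, ?_, hf.2.1.cons_cons (not_lt.mp huv), rfl⟩
      rintro x (_ | ⟨_, hx⟩)
      exacts [hu, hf.1 x hx]

theorem length_le_of_isPrefix {b : List A} (hf : IsCFLFactorization w (a :: f))
    (hb : IsLyndon b) (hbw : b <+: w) : b.length ≤ a.length := by
  obtain ⟨hly, hch, rfl⟩ := hf
  by_contra! hab
  obtain ⟨c, rfl⟩ := prefix_of_prefix_length_le (prefix_append a _) hbw hab.le
  have hc : c ≠ [] := by
    rintro rfl
    simp at hab
  refine hb.not_isPrefix_flatten (fun x hx => ?_) (hly a mem_cons_self).1 hc rfl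
    ((prefix_append_right_inj a).mp hbw)
  exact (hch.rel_cons hx).trans (le_of_isPrefix (prefix_append a c))

theorem unique (hf : IsCFLFactorization w f) (hg : IsCFLFactorization w g) : f = g := by
  induction f generalizing w g with
  | nil =>
    obtain ⟨-, -, rfl⟩ := hf
    exact hg.eq_nil.symm
  | cons a f ih =>
    cases g with
    | nil =>
      obtain ⟨-, -, rfl⟩ := hg
      exact hf.eq_nil
    | cons b g =>
      have ha : a <+: w := hf.2.2 ▸ prefix_append _ _
      have hb : b <+: w := hg.2.2 ▸ prefix_append _ _
      have hab_len : a.length ≤ b.length := hg.length_le_of_isPrefix (hf.1 a mem_cons_self) ha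
      have hba_len : b.length ≤ a.length := hf.length_le_of_isPrefix (hg.1 b mem_cons_self) hb
      obtain rfl : a = b := (prefix_of_prefix_length_le ha hb hab_len).eq_of_length
        (le_antisymm hab_len hba_len)
      have hfg : f.flatten = g.flatten := append_cancel_left (hf.2.2.trans hg.2.2.symm)
      exact congrArg (a :: ·) (ih hf.tail (hfg ▸ hg.tail))

end IsCFLFactorization

theorem exists_isCFLFactorization (w : List A) : ∃ f, IsCFLFactorization w f := by
  induction w with
  | nil => exact ⟨[], by simp [IsCFLFactorization]⟩
  | cons a w ih =>
    obtain ⟨f, hf⟩ := ih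
    exact IsCFLFactorization.exists_append (IsLyndon.singleton a) hf

end

theorem exists_unique_CFL_factorization_general {A : Type*} [LinearOrder A]
    (w : List A) :
    ∃! f : List (List A),
      (∀ a ∈ f, IsLyndon a) ∧
      f.Chain' (fun a b => ¬ List.Lex (· < ·) a b) ∧
      f.flatten = w := by
  obtain ⟨f, hf⟩ := exists_isCFLFactorization w
  have : ∃! f, IsCFLFactorization w f := ⟨f, hf, fun g hg => hg.unique hf⟩
  simp only [List.lex_lt, not_lt]
  exact this

/-- every nonempty word over a totally ordered alphabet admits a unique
Chen–Fox–Lyndon factorization into a lexicographically non-increasing concatenation of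
Lyndon words. -/
theorem exists_unique_CFL_factorization {A : Type*} [LinearOrder A]
    (w : List A) (hw : w ≠ []) :
    ∃! f : List (List A),
      (∀ a ∈ f, IsLyndon a) ∧
      f.Chain' (fun a b => ¬ List.Lex (· < ·) a b) ∧
      f.flatten = w :=
  exists_unique_CFL_factorization_general w
end

section
/- Let (H, m, +) be a commutative K-algebra with underlying K-module free on a monoid basis A* (words over alphabet A). If the family (B^m_u)_{u ∈ A*} defined by B^m_u = m(B_{a₁},…,B_{a_p}) for the CFL factorization (a₁,…,a_p) of u is a K-basis of H, then the family (B_w)_{w Lyndon} freely generates (H, m, +) as a commutative K-algebra; conversely, if (B_w)_{w Lyndon} freely generates H, then (B^m_u)_{u ∈ A*} is a K-basis. -/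
open List

section Lex
variable {A : Type*} [LinearOrder A]

theorem lex_iff_lt {s t : List A} : List.Lex (· < ·) s t ↔ s < t := Iff.rfl

theorem lex_append_right' (l : List A) {r : List A} (hr : r ≠ []) :
    List.Lex (· < ·) l (l ++ r) := by
  induction l with
  | nil => cases r with
    | nil => exact absurd rfl hr
    | cons a t => exact List.Lex.nil
  | cons a l ih => exact List.Lex.cons ih

theorem lex_of_prefix {s t : List A} (h : s <+: t) (hne : s ≠ t) :
    List.Lex (· < ·) s t := by
  obtain ⟨r, rfl⟩ := h
  rcases eq_or_ne r [] with rfl | hr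
  · simp at hne
  · exact lex_append_right' s hr

theorem lex_append_of_not_prefix : ∀ {s t : List A}, List.Lex (· < ·) s t → ¬ s <+: t →
    ∀ (u v : List A), List.Lex (· < ·) (s ++ u) (t ++ v)
  | _, _, List.Lex.nil, hp, u, v => absurd (List.nil_prefix) hp
  | _, _, List.Lex.rel h, hp, u, v => List.Lex.rel h
  | a :: s, _ :: t, List.Lex.cons h, hp, u, v => by
      refine List.Lex.cons (lex_append_of_not_prefix h ?_ u v)
      intro hpre
      exact hp (List.cons_prefix_cons.mpr ⟨rfl, hpre⟩)
end Lex

section Lyndon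
variable {A : Type*} [LinearOrder A]

theorem IsLyndon.ne_nil {w : List A} (h : IsLyndon w) : w ≠ [] := h.1

theorem lyndon_singleton (a : A) : IsLyndon [a] := by
  refine ⟨by simp, fun u v hu hv huv => ?_⟩
  exfalso
  have := congrArg List.length huv
  simp [List.length_append] at this
  rcases u with _ | ⟨x, u⟩; · exact hu rfl
  rcases v with _ | ⟨y, v⟩; · exact hv rfl
  simp at this
  omega

/-- If `l₁ < l₂` with `l₂` Lyndon and `l₁ ≠ []`, then `l₁ ++ l₂ < l₂`. -/
theorem append_lex_right {l₁ l₂ : List A} (h₂ : IsLyndon l₂)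
    (h : List.Lex (· < ·) l₁ l₂) (h₁ : l₁ ≠ []) :
    List.Lex (· < ·) (l₁ ++ l₂) l₂ := by
  by_cases hp : l₁ <+: l₂
  · obtain ⟨r, rfl⟩ := hp
    have hr : r ≠ [] := by rintro rfl; simp at h
    have : List.Lex (· < ·) (l₁ ++ r) r := h₂.2 l₁ r h₁ hr rfl
    have := List.Lex.append_left (· < ·) this l₁
    simpa using this
  · have := lex_append_of_not_prefix h hp l₂ []
    simpa using this

theorem IsLyndon.append_s5 {l₁ l₂ : List A} (h₁ : IsLyndon l₁) (h₂ : IsLyndon l₂)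
    (h : List.Lex (· < ·) l₁ l₂) : IsLyndon (l₁ ++ l₂) := by
  refine ⟨by simp [h₁.ne_nil], fun u v hu hv huv => ?_⟩
  rcases List.append_eq_append_iff.mp huv.symm with ⟨w, hw1, hw2⟩ | ⟨w, hw1, hw2⟩
  · -- l₁ = u ++ w, v = w ++ l₂
    rcases eq_or_ne w [] with rfl | hwne
    · simp at hw2; subst hw2
      exact append_lex_right h₂ h h₁.ne_nil
    · have hlex : List.Lex (· < ·) l₁ w := h₁.2 u w hu hwne hw1
      have hlen : w.length < l₁.length := by
        rw [hw1, List.length_append]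
        cases u with
        | nil => exact absurd rfl hu
        | cons x xs => simp
      have hnp : ¬ l₁ <+: w := fun hp => absurd hp.length_le (by omega)
      have := lex_append_of_not_prefix hlex hnp l₂ l₂
      rw [hw2]
      exact this
  · -- u = l₁ ++ w, l₂ = w ++ v
    rcases eq_or_ne w [] with rfl | hwne
    · simp at hw2; subst hw2
      exact append_lex_right h₂ h h₁.ne_nil
    · have hlex : List.Lex (· < ·) l₂ v := h₂.2 w v hwne hv hw2
      have h2 : List.Lex (· < ·) (l₁ ++ l₂) l₂ := append_lex_right h₂ h h₁.ne_nil
      exact lex_iff_lt.mpr (lt_trans (lex_iff_lt.mp h2) (lex_iff_lt.mp hlex))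
end Lyndon

section CFL
variable {A : Type*} [LinearOrder A]

/-- relation "not lexicographically smaller" (i.e. ≥) used for non-increasing chains -/
abbrev NIncr (a b : List A) : Prop := ¬ List.Lex (· < ·) a b

def insertFactor : List A → List (List A) → List (List A)
  | m, [] => [m]
  | m, l :: ls => if List.Lex (· < ·) m l then insertFactor (m ++ l) ls else m :: l :: ls

theorem insertFactor_flatten (m : List A) (ls : List (List A)) :
    (insertFactor m ls).flatten = m ++ ls.flatten := by
  induction ls generalizing m with
  | nil => simp [insertFactor]
  | cons l ls ih =>
    rw [insertFactor]
    split
    · rw [ih]; simp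
    · simp

theorem insertFactor_lyndon {m : List A} {ls : List (List A)} (hm : IsLyndon m)
    (hls : ∀ l ∈ ls, IsLyndon l) : ∀ x ∈ insertFactor m ls, IsLyndon x := by
  induction ls generalizing m with
  | nil => simpa [insertFactor] using hm
  | cons l ls ih =>
    rw [insertFactor]
    split
    · exact ih (hm.append_s5 (hls l (by simp)) (by assumption)) (fun x hx => hls x (by simp [hx]))
    · intro x hx
      rcases List.mem_cons.mp hx with rfl | hx
      · exact hm
      · exact hls x hx

theorem insertFactor_chain {m : List A} {ls : List (List A)}
    (hls : ls.Chain' NIncr) : (insertFactor m ls).Chain' NIncr := by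
  induction ls generalizing m with
  | nil => simp [insertFactor, List.Chain']
  | cons l ls ih =>
    rw [insertFactor]
    split
    · exact ih hls.tail
    · exact List.IsChain.cons_cons (by assumption) hls

def cfl : List A → List (List A)
  | [] => []
  | a :: u => insertFactor [a] (cfl u)

theorem cfl_flatten (u : List A) : (cfl u).flatten = u := by
  induction u with
  | nil => simp [cfl]
  | cons a u ih => rw [cfl, insertFactor_flatten, ih]; rfl

theorem cfl_lyndon (u : List A) : ∀ x ∈ cfl u, IsLyndon x := by
  induction u with
  | nil => simp [cfl]
  | cons a u ih => exact insertFactor_lyndon (lyndon_singleton a) ih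

theorem cfl_chain (u : List A) : (cfl u).Chain' NIncr := by
  induction u with
  | nil => simp [cfl, List.Chain']
  | cons a u ih => exact insertFactor_chain ih
end CFL

section Unique
variable {A : Type*} [LinearOrder A]

set_option linter.unusedSectionVars false

theorem le_of_prefix {s t : List A} (h : s <+: t) : s ≤ t :=
  (eq_or_ne s t).elim le_of_eq (fun hne => le_of_lt (lex_iff_lt.mp (lex_of_prefix h hne)))

instance : IsTrans (List A) (NIncr (A := A)) :=
  ⟨fun a b c hab hbc h =>
    hab (lex_iff_lt.mpr (lt_of_lt_of_le (lex_iff_lt.mp h) (not_lt.mp hbc)))⟩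
theorem prefix_decomp : ∀ (ms : List (List A)), (∀ m ∈ ms, m ≠ []) →
    ∀ t : List A, t ≠ [] → t <+: ms.flatten →
    ∃ m ∈ ms, ∃ s : List A, s ≠ [] ∧ s <+: m ∧ s <:+ t := by
  intro ms
  induction ms with
  | nil => intro _ t ht hp; simp at hp; exact absurd hp ht
  | cons m ms ih =>
    intro hne t ht hp
    simp only [List.flatten_cons] at hp
    by_cases hlen : t.length ≤ m.length
    · refine ⟨m, by simp, t, ht, ?_, List.suffix_refl t⟩
      exact List.prefix_of_prefix_length_le hp (List.prefix_append m ms.flatten) hlen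
    · have hmp : m <+: t :=
        List.prefix_of_prefix_length_le (List.prefix_append m ms.flatten) hp (by omega)
      obtain ⟨t', rfl⟩ := hmp
      have ht' : t' ≠ [] := by
        rintro rfl; simp at hlen
      have hp' : t' <+: ms.flatten := by
        obtain ⟨q, hq⟩ := hp
        exact ⟨q, by simpa using hq⟩
      obtain ⟨m', hm', s, hs, hsp, hss⟩ := ih (fun x hx => hne x (by simp [hx])) t' ht' hp'
      exact ⟨m', by simp [hm'], s, hs, hsp, hss.trans (List.suffix_append m t')⟩

/-- core contradiction: head of one factorization cannot be strictly longer -/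
theorem cfl_unique_aux {l m : List A} {ls ms : List (List A)}
    (hl : IsLyndon l) (hmL : IsLyndon m) (hms : ∀ x ∈ ms, IsLyndon x)
    (hchain : (m :: ms).Chain' NIncr)
    (heq : l ++ ls.flatten = m ++ ms.flatten)
    (hlen : m.length < l.length) : False := by
  have hmp : m <+: l :=
    List.prefix_of_prefix_length_le (List.prefix_append m ms.flatten)
      (heq ▸ List.prefix_append l ls.flatten) (by omega)
  obtain ⟨t, rfl⟩ := hmp
  have ht : t ≠ [] := by rintro rfl; simp at hlen
  have htp : t <+: ms.flatten := by
    have : t ++ ls.flatten = ms.flatten := by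
      have := heq
      rw [List.append_assoc] at this
      exact (List.append_cancel_left this)
    exact ⟨ls.flatten, this⟩
  obtain ⟨m', hm', s, hs, hsp, hss⟩ :=
    prefix_decomp ms (fun x hx => (hms x hx).ne_nil) t ht htp
  -- l < s
  have h1 : (m ++ t) < s := by
    obtain ⟨t₀, rfl⟩ := hss
    exact lex_iff_lt.mp (hl.2 (m ++ t₀) s (by simp [hmL.ne_nil]) hs (by simp))
  -- s ≤ m'
  have h2 : s ≤ m' := le_of_prefix hsp
  -- m' ≤ m
  have h3 : m' ≤ m := by
    have hpw := (List.isChain_iff_pairwise.mp hchain)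
    have := (List.pairwise_cons.mp hpw).1 m' hm'
    exact not_lt.mp this
  -- m < m ++ t
  have h4 : m < m ++ t := lex_iff_lt.mp (lex_append_right' m ht)
  exact lt_irrefl _ (lt_of_lt_of_le h1 ((h2.trans h3).trans (le_of_lt h4)))
end Unique

section Unique2
variable {A : Type*} [LinearOrder A]
set_option linter.unusedSectionVars false

theorem cfl_unique : ∀ (ls ms : List (List A)), (∀ x ∈ ls, IsLyndon x) →
    (∀ x ∈ ms, IsLyndon x) → ls.Chain' NIncr → ms.Chain' NIncr →
    ls.flatten = ms.flatten → ls = ms := by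
  intro ls
  induction ls with
  | nil =>
    intro ms _ hms _ _ heq
    cases ms with
    | nil => rfl
    | cons m ms =>
      exfalso
      simp only [List.flatten_nil, List.flatten_cons] at heq
      exact (hms m (by simp)).ne_nil (List.append_eq_nil_iff.mp heq.symm).1
  | cons l ls ih =>
    intro ms hls hms hcl hcm heq
    cases ms with
    | nil =>
      exfalso
      simp only [List.flatten_cons, List.flatten_nil] at heq
      exact (hls l (by simp)).ne_nil (List.append_eq_nil_iff.mp heq).1
    | cons m ms =>
      simp only [List.flatten_cons] at heq
      have hlen : l.length = m.length := by
        rcases lt_trichotomy l.length m.length with h | h | h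
        · exact absurd (cfl_unique_aux (hms m (by simp)) (hls l (by simp))
            (fun x hx => hls x (by simp [hx])) hcl heq.symm h) not_false
        · exact h
        · exact absurd (cfl_unique_aux (hls l (by simp)) (hms m (by simp))
            (fun x hx => hms x (by simp [hx])) hcm heq h) not_false
      obtain ⟨h1, h2⟩ := List.append_inj heq hlen
      subst h1
      rw [ih ms (fun x hx => hls x (by simp [hx])) (fun x hx => hms x (by simp [hx]))
        hcl.tail hcm.tail h2]
end Unique2

section Bij
variable {A : Type*} [LinearOrder A]
set_option linter.unusedSectionVars false

local notation "Lyn" => {w : List A // IsLyndon w}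

noncomputable instance : LinearOrder ({w : List A // IsLyndon w}) := Subtype.instLinearOrder _
noncomputable instance : DecidableRel (fun a b : {w : List A // IsLyndon w} => a ≥ b) :=
  fun _ _ => inferInstanceAs (Decidable _)

noncomputable def sortedList (d : Lyn →₀ ℕ) : List Lyn :=
  (Finsupp.toMultiset d).sort (· ≥ ·)

noncomputable def E (d : Lyn →₀ ℕ) : List A :=
  ((sortedList d).map Subtype.val).flatten

theorem sortedList_sorted (d : Lyn →₀ ℕ) : (sortedList d).Pairwise (· ≥ ·) :=
  Multiset.pairwise_sort _ _

theorem sortedList_lyndon (d : Lyn →₀ ℕ) :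
    ∀ x ∈ (sortedList d).map Subtype.val, IsLyndon x := by
  intro x hx
  obtain ⟨y, _, rfl⟩ := List.mem_map.mp hx
  exact y.2

theorem sortedList_chain (d : Lyn →₀ ℕ) :
    ((sortedList d).map Subtype.val).Chain' NIncr := by
  refine List.Pairwise.isChain ?_
  refine List.Pairwise.map _ ?_ (sortedList_sorted d)
  intro a b hab
  exact fun h => absurd (lex_iff_lt.mp h) (not_lt.mpr hab)

theorem E_injective : Function.Injective (E (A := A)) := by
  intro d₁ d₂ h
  have h1 : (sortedList d₁).map Subtype.val = (sortedList d₂).map Subtype.val :=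
    cfl_unique _ _ (sortedList_lyndon d₁) (sortedList_lyndon d₂)
      (sortedList_chain d₁) (sortedList_chain d₂) h
  have h2 : sortedList d₁ = sortedList d₂ :=
    List.map_injective_iff.mpr Subtype.val_injective h1
  have h3 : Finsupp.toMultiset d₁ = Finsupp.toMultiset d₂ := by
    rw [← Multiset.sort_eq (α := Lyn) (Finsupp.toMultiset d₁) (· ≥ ·),
      ← Multiset.sort_eq (α := Lyn) (Finsupp.toMultiset d₂) (· ≥ ·)]
    exact congrArg _ h2
  classical
  have := congrArg Multiset.toFinsupp h3
  rwa [Finsupp.toMultiset_toFinsupp, Finsupp.toMultiset_toFinsupp] at this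

theorem E_surjective : Function.Surjective (E (A := A)) := by
  classical
  intro u
  set L := cfl u with hL
  set L' : List Lyn := L.pmap (fun x hx => (⟨x, hx⟩ : Lyn)) (cfl_lyndon u) with hL'
  refine ⟨Multiset.toFinsupp (↑L' : Multiset Lyn), ?_⟩
  have hmv : L'.map Subtype.val = L := by
    rw [hL', List.map_pmap]
    simp
  have hsorted : L'.Pairwise (· ≥ ·) := by
    rw [hL']
    refine (List.pairwise_pmap _).mpr ?_
    refine (List.isChain_iff_pairwise.mp (cfl_chain u)).imp ?_
    intro a b hab h1 h2
    exact not_lt.mp (fun hlt => hab (lex_iff_lt.mpr hlt))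
  have hperm : sortedList (Multiset.toFinsupp (↑L' : Multiset Lyn)) = L' := by
    refine List.Perm.eq_of_pairwise' (sortedList_sorted _) hsorted ?_
    rw [← Multiset.coe_eq_coe]
    rw [sortedList, Multiset.toFinsupp_toMultiset, Multiset.sort_eq]
  rw [E, hperm, hmv, hL, cfl_flatten]
end Bij

section Prod
variable {A : Type*} [LinearOrder A] {H : Type*} [CommMonoid H]
set_option linter.unusedSectionVars false

theorem prod_sortedList (g : {w : List A // IsLyndon w} → H)
    (d : {w : List A // IsLyndon w} →₀ ℕ) :
    ((sortedList d).map g).prod = d.prod fun w n => g w ^ n := by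
  classical
  have h1 : ((sortedList d : List _) : Multiset _) = Finsupp.toMultiset d :=
    Multiset.sort_eq _ _
  calc ((sortedList d).map g).prod
      = ((Finsupp.toMultiset d).map g).prod := by rw [← h1]; rfl
    _ = (Finsupp.toMultiset (d.mapDomain g)).prod := by rw [Finsupp.toMultiset_map]
    _ = (d.mapDomain g).prod (fun a n => a ^ n) := Finsupp.prod_toMultiset _
    _ = d.prod fun w n => g w ^ n :=
        Finsupp.prod_mapDomain_index (fun _ => pow_zero _) (fun _ _ _ => pow_add _ _ _)

theorem foldl_mul_eq_prod (g : List A → H) (a : List A) (l : List (List A)) :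
    l.foldl (fun x w => x * g w) (g a) = ((a :: l).map g).prod := by
  suffices h : ∀ (x : H) (l : List (List A)),
      l.foldl (fun x w => x * g w) x = x * (l.map g).prod by
    rw [h]; simp
  intro x l
  induction l generalizing x with
  | nil => simp
  | cons w l ih => simp [ih, mul_assoc]
end Prod


/-- let `(H, m, +)` be a commutative `K`-algebra whose underlying `K`-module
is free on the monoid basis `A*` of words over `A`, `(B w)` a family indexed by Lyndon
words potentially generating `H`, and `(Bm u)_{u ∈ A*}` the family obtained by multiplying
the `B`-values along the Chen–Fox–Lyndon factorizations.  Then `(Bm u)_{u ∈ A*}` is a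
`K`-basis of `H` if and only if `(B w)_{w Lyndon}` freely generates `H` as a commutative
`K`-algebra, i.e. the induced map from the polynomial algebra on the Lyndon words is an
isomorphism. -/
theorem basis_iff_freely_generates {K A H : Type*} [CommRing K] [Algebra ℚ K]
    [LinearOrder A] [CommRing H] [Algebra K H]
    (b : Module.Basis (List A) K H)
    (B : List A → H)
    (Bm : List A → H)
    (hBm_empty : Bm [] = 1)
    (hBm : ∀ u : List A, u ≠ [] → ∀ (a₁ : List A) (rest : List (List A)),
        (∀ a ∈ a₁ :: rest, IsLyndon a) →
        (a₁ :: rest).Chain' (fun a b => ¬ List.Lex (· < ·) a b) →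
        (a₁ :: rest).flatten = u →
        Bm u = rest.foldl (fun x w => x * B w) (B a₁)) :
    (∃ c : Module.Basis (List A) K H, ∀ u : List A, c u = Bm u) ↔
      Function.Bijective
        (MvPolynomial.aeval (fun w : {w : List A // IsLyndon w} => B w.val) :
          MvPolynomial {w : List A // IsLyndon w} K →ₐ[K] H) := by
  classical
  set φ := (MvPolynomial.aeval (fun w : {w : List A // IsLyndon w} => B w.val) :
    MvPolynomial {w : List A // IsLyndon w} K →ₐ[K] H) with hφ
  have hE : Function.Bijective (E (A := A)) := ⟨E_injective, E_surjective⟩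
  set e : ({w : List A // IsLyndon w} →₀ ℕ) ≃ List A := Equiv.ofBijective _ hE with he
  have hEe : ∀ d, e d = E d := fun d => rfl
  have key : ∀ d : {w : List A // IsLyndon w} →₀ ℕ,
      φ (MvPolynomial.monomial d 1) = Bm (E d) := by
    intro d
    have h1 : φ (MvPolynomial.monomial d 1) = d.prod fun w n => B w.val ^ n := by
      rw [hφ, MvPolynomial.aeval_monomial]; simp
    rw [h1, ← prod_sortedList]
    rcases hmap : (sortedList d).map Subtype.val with _ | ⟨a₁, rest⟩
    · have hnil : sortedList d = [] := List.map_eq_nil_iff.mp hmap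
      simp [E, hnil, hBm_empty]
    · have hEd : E d = (a₁ :: rest).flatten := by rw [E, hmap]
      have ha₁ : IsLyndon a₁ := sortedList_lyndon d a₁ (by rw [hmap]; simp)
      have hne : E d ≠ [] := by
        rw [hEd, List.flatten_cons]
        simp [ha₁.ne_nil]
      have hfold := hBm (E d) hne a₁ rest
        (by rw [← hmap]; exact sortedList_lyndon d)
        (hmap ▸ sortedList_chain d) hEd.symm
      rw [hfold, foldl_mul_eq_prod, ← hmap, List.map_map]
      rfl
  constructor
  · rintro ⟨c, hc⟩
    set g := Module.Basis.equiv (MvPolynomial.basisMonomials {w : List A // IsLyndon w} K)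
      (c.reindex e.symm) (Equiv.refl _) with hg
    have hbne : φ.toLinearMap = g.toLinearMap := by
      apply (MvPolynomial.basisMonomials {w : List A // IsLyndon w} K).ext
      intro d
      have hR : g ((MvPolynomial.basisMonomials {w : List A // IsLyndon w} K) d)
          = (c.reindex e.symm) d := by
        rw [hg, Module.Basis.equiv_apply, Equiv.refl_apply]
      have h2 : φ.toLinearMap ((MvPolynomial.basisMonomials _ K) d)
          = Bm (E d) := by
        have h3 : ((MvPolynomial.basisMonomials {w : List A // IsLyndon w} K) d)
            = MvPolynomial.monomial d 1 := by
          rw [show ⇑(MvPolynomial.basisMonomials {w : List A // IsLyndon w} K)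
            = fun s => MvPolynomial.monomial s (1 : K) from
            MvPolynomial.coe_basisMonomials _ _]
        rw [h3]
        exact key d
      show φ.toLinearMap _ = g _
      rw [h2, hR, Module.Basis.reindex_apply, Equiv.symm_symm, hc, hEe]
    have hco : ⇑φ = ⇑g := by
      funext x
      have : φ x = φ.toLinearMap x := rfl
      rw [this, hbne]
      rfl
    rw [hco]
    exact g.bijective
  · intro hbij
    have hbij' : Function.Bijective φ.toLinearMap := hbij
    set ψ := LinearEquiv.ofBijective φ.toLinearMap hbij' with hψ
    set c := ((MvPolynomial.basisMonomials {w : List A // IsLyndon w} K).map ψ).reindex e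
      with hcdef
    refine ⟨c, fun u => ?_⟩
    rw [hcdef, Module.Basis.reindex_apply, Module.Basis.map_apply]
    have h3 : ((MvPolynomial.basisMonomials {w : List A // IsLyndon w} K) (e.symm u))
        = MvPolynomial.monomial (e.symm u) 1 := by
      rw [show ⇑(MvPolynomial.basisMonomials {w : List A // IsLyndon w} K)
        = fun s => MvPolynomial.monomial s (1 : K) from
        MvPolynomial.coe_basisMonomials _ _]
    rw [h3]
    have h4 : ψ (MvPolynomial.monomial (e.symm u) 1)
        = φ (MvPolynomial.monomial (e.symm u) 1) := rfl
    rw [h4, key]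
    have h5 : E (e.symm u) = u := by
      rw [← hEe]
      exact e.apply_symm_apply u
    rw [h5]
end

section
/- Let f, g ∈ t·K⟦t⟧ be formal power series without constant term and let K = (K₁,…,K_r) be a composition of n. Then the product ∏_{s=1}^{r} [t^{K_s}](f ∘ g) equals the sum over x from 1 to n, over compositions J of x of length r, and over compositions I of n such that the composition J ∘ I (defined by grouping I into consecutive blocks of sizes J₁,…,J_r and summing each block) equals K, of (∏_{s=1}^{r} [t^{J_s}]f)·(∏_{a=1}^{x} [t^{I_a}]g). -/
/-!
Expanding `[t^k] g^j` (with `g(0) = 0`) as a sum over the compositions of `k` with `j` parts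
gives `[t^k](f ∘ g) = ∑_{c ⊨ k} [t^{ℓ(c)}]f · ∏_i [t^{c_i}]g`. Hence `∏_s [t^{K_s}](f ∘ g)` is a
sum over families `(c_s)_s` of compositions of the parts `K_s`. Concatenating the `c_s` into `I`
and recording their lengths as `J` is Mathlib's bijection `Composition.sigmaEquivSigmaPi` onto
the pairs `(I, J)` with `J ∘ I = K`, and it carries the summand to
`(∏_s [t^{J_s}]f) · (∏_a [t^{I_a}]g)`.
-/

/-- Composition (substitution) `f ∘ g` of formal power series, for `g` with zero constant
term. -/
noncomputable def psComp {K : Type*} [CommRing K] (f g : PowerSeries K) : PowerSeries K :=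
  PowerSeries.mk fun k =>
    PowerSeries.coeff k (∑ j ∈ Finset.range (k + 1), (PowerSeries.coeff j f) • g ^ j)

open PowerSeries

namespace Composition

section

variable {M : Type*} [CommMonoid M] {n : ℕ}

lemma prod_blocksFun_eq_prod_map (c : Composition n) (h : ℕ → M) :
    ∏ i, h (c.blocksFun i) = (c.blocks.map h).prod :=
  Fin.prod_univ_fun_getElem c.blocks h

lemma prod_blocksFun_of_blocks_eq_ofFn {j : ℕ} {c : Composition n} {v : Fin j → ℕ}
    (hc : c.blocks = List.ofFn v) (h : ℕ → M) :
    ∏ i, h (c.blocksFun i) = ∏ i, h (v i) := by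
  rw [prod_blocksFun_eq_prod_map, hc, List.map_ofFn, List.prod_ofFn, Function.comp_def]

variable (a : Composition n) (b : Composition a.length)

lemma prod_sigmaCompositionAux (φ : List ℕ → M) :
    ∏ s, φ (a.sigmaCompositionAux b s).blocks = ((a.blocks.splitWrtComposition b).map φ).prod := by
  rw [← Fin.prod_univ_fun_getElem]
  exact Fintype.prod_equiv (finCongr (List.length_map _)) _ _ fun _ => rfl

lemma prod_length_sigmaCompositionAux (h : ℕ → M) :
    ∏ s, h (a.sigmaCompositionAux b s).length = ∏ s, h (b.blocksFun s) := by
  rw [prod_blocksFun_eq_prod_map, ← List.map_length_splitWrtComposition a.blocks b, List.map_map]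
  exact prod_sigmaCompositionAux a b (h ∘ List.length)

lemma prod_prod_blocksFun_sigmaCompositionAux (h : ℕ → M) :
    ∏ s, ∏ i, h ((a.sigmaCompositionAux b s).blocksFun i) = ∏ i, h (a.blocksFun i) := by
  simp_rw [prod_blocksFun_eq_prod_map]
  rw [prod_sigmaCompositionAux a b fun l => (l.map h).prod]
  conv_rhs => rw [← a.blocks.flatten_splitWrtComposition b, List.map_flatten, List.prod_flatten,
    List.map_map]
  rfl

end

lemma sum_Icc_sum_sum_eq_sum_sigma {M : Type*} [AddCommMonoid M] {n : ℕ} (hn : 0 < n)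
    (F : ∀ x, Composition x → Composition n → M) (hF : ∀ x J I, I.length ≠ x → F x J I = 0) :
    ∑ x ∈ Finset.Icc 1 n, ∑ J : Composition x, ∑ I : Composition n, F x J I =
      ∑ p : Σ I : Composition n, Composition I.length, F p.1.length p.2 p.1 := by
  rw [Fintype.sum_sigma, Finset.sum_congr rfl fun x _ => Finset.sum_comm, Finset.sum_comm]
  refine Fintype.sum_congr _ _ fun I => ?_
  refine Finset.sum_eq_single_of_mem _ ?_ fun x _ hx =>
    Finset.sum_eq_zero fun J _ => hF x J I (Ne.symm hx)
  exact Finset.mem_Icc.2 ⟨I.length_pos_of_pos hn, I.length_le⟩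

end Composition

theorem PowerSeries.coeff_pow_eq_sum_compositions {R : Type*} [CommSemiring R] {g : R⟦X⟧}
    (hg : constantCoeff g = 0) (k j : ℕ) :
    coeff k (g ^ j) = ∑ c : Composition k with c.length = j, ∏ i, coeff (c.blocksFun i) g := by
  classical
  rw [← Fin.prod_const, coeff_prod, ← Finset.sum_filter_of_ne (p := fun l => ∀ i, l i ≠ 0)]
  swap
  · intro l _ hl i
    contrapose! hl
    exact Finset.prod_eq_zero (Finset.mem_univ i) (by rw [hl, coeff_zero_eq_constantCoeff, hg])
  refine Finset.sum_bij (fun l hl => ⟨List.ofFn l, ?_, ?_⟩) ?_ ?_ ?_ ?_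
  · simp only [List.mem_ofFn]
    rintro _ ⟨i, rfl⟩
    exact Nat.pos_of_ne_zero ((Finset.mem_filter.1 hl).2 i)
  · rw [List.sum_ofFn]
    simpa using (Finset.mem_filter.1 hl).1
  · intro l _
    simp [Composition.length]
  · intro l _ l' _ h
    simpa [Finsupp.ext_iff, funext_iff] using congrArg Composition.blocks h
  · intro c hc
    have hc : c.length = j := (Finset.mem_filter.1 hc).2
    refine ⟨Finsupp.equivFunOnFinite.symm fun i => c.blocksFun (i.cast hc.symm), ?_, ?_⟩
    · simp only [Finset.mem_filter, Finset.mem_finsuppAntidiag, Finset.subset_univ, and_true,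
        Finsupp.coe_equivFunOnFinite_symm]
      refine ⟨?_, fun i => (c.blocks_pos' _ _).ne'⟩
      conv_rhs => rw [← c.sum_blocksFun]
      exact Fintype.sum_equiv (finCongr hc.symm) _ _ fun _ => rfl
    · ext1
      simp only [Finsupp.coe_equivFunOnFinite_symm]
      rw [← List.ofFn_congr hc, c.ofFn_blocksFun]
  · intro l _
    exact (Composition.prod_blocksFun_of_blocks_eq_ofFn rfl fun m => coeff m g).symm

section

variable {R : Type*} [CommSemiring R] (f g : R⟦X⟧)

noncomputable def psCompTerm {k : ℕ} (c : Composition k) : R :=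
  coeff c.length f * ∏ i, coeff (c.blocksFun i) g

lemma prod_psCompTerm_sigmaCompositionAux {n : ℕ} (a : Composition n) (b : Composition a.length) :
    ∏ s, psCompTerm f g (a.sigmaCompositionAux b s) =
      (∏ s, coeff (b.blocksFun s) f) * ∏ i, coeff (a.blocksFun i) g := by
  simp only [psCompTerm]
  rw [Finset.prod_mul_distrib, a.prod_length_sigmaCompositionAux b fun m => coeff m f,
    a.prod_prod_blocksFun_sigmaCompositionAux b fun m => coeff m g]

lemma sum_prod_psCompTerm_eq_sum_gather {n : ℕ} (c : Composition n) :
    ∑ τ : ∀ s, Composition (c.blocksFun s), ∏ s, psCompTerm f g (τ s) =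
      ∑ p : Σ a : Composition n, Composition a.length,
        if p.1.gather p.2 = c then
          (∏ s, coeff (p.2.blocksFun s) f) * ∏ i, coeff (p.1.blocksFun i) g
        else 0 := by
  have hfiber : ∑ q : Σ d : Composition n, ∀ s, Composition (d.blocksFun s),
      (if q.1 = c then ∏ s, psCompTerm f g (q.2 s) else 0) =
      ∑ τ : ∀ s, Composition (c.blocksFun s), ∏ s, psCompTerm f g (τ s) := by
    rw [Fintype.sum_sigma]
    simp only [Finset.sum_ite_irrel, Finset.sum_const_zero, Finset.sum_ite_eq', Finset.mem_univ,
      if_true]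
  simp_rw [← prod_psCompTerm_sigmaCompositionAux, ← hfiber,
    ← Equiv.sum_comp (Composition.sigmaEquivSigmaPi n)]
  rfl

end

theorem coeff_psComp {R : Type*} [CommRing R] {f g : R⟦X⟧} (hg : constantCoeff g = 0) (k : ℕ) :
    coeff k (psComp f g) = ∑ c : Composition k, psCompTerm f g c := by
  calc coeff k (psComp f g)
      = ∑ j ∈ Finset.range (k + 1), ∑ c : Composition k with c.length = j, psCompTerm f g c := by
        simp only [psComp, coeff_mk, map_sum, coeff_smul, coeff_pow_eq_sum_compositions hg,
          Finset.mul_sum, smul_eq_mul]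
        refine Finset.sum_congr rfl fun j _ => Finset.sum_congr rfl fun c hc => ?_
        rw [psCompTerm, ← (Finset.mem_filter.1 hc).2]
    _ = ∑ c : Composition k, psCompTerm f g c :=
        Finset.sum_fiberwise_of_maps_to
          (fun c _ => Finset.mem_range.2 (Nat.lt_succ_of_le c.length_le)) _

theorem prod_coeff_psComp_general {R : Type*} [CommRing R] (f g : PowerSeries R)
    (hg : PowerSeries.constantCoeff g = 0)
    (n : ℕ) (hn : 0 < n) (Kc : Composition n) :
    ∏ s : Fin Kc.length, PowerSeries.coeff (Kc.blocksFun s) (psComp f g) =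
      ∑ x ∈ Finset.Icc 1 n, ∑ J : Composition x, ∑ I : Composition n,
        if J.length = Kc.length ∧ I.length = x ∧
            (I.blocks.splitWrtComposition J).map List.sum = Kc.blocks then
          (∏ s : Fin J.length, PowerSeries.coeff (J.blocksFun s) f) *
            (∏ a : Fin I.length, PowerSeries.coeff (I.blocksFun a) g)
        else 0 := by
  rw [Composition.sum_Icc_sum_sum_eq_sum_sigma hn _ fun x J I hI => if_neg fun h => hI h.2.1]
  simp_rw [coeff_psComp hg, Fintype.prod_sum, sum_prod_psCompTerm_eq_sum_gather]
  refine Fintype.sum_congr _ _ fun p => if_congr ?_ rfl rfl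
  exact ⟨fun h => ⟨h ▸ (p.1.length_gather p.2).symm, trivial, congrArg Composition.blocks h⟩,
    fun h => Composition.ext h.2.2⟩

/-- for `f, g ∈ t·K⟦t⟧` and a composition `K = (K₁,…,K_r)` of `n`,
`∏_{s} [t^{K_s}](f ∘ g)` equals the sum over `1 ≤ x ≤ n`, over compositions `J` of `x`
with `len(J) = r`, and over compositions `I` of `n` with `len(I) = x` and `J ∘ I = K`
(grouping the parts of `I` into consecutive blocks of sizes `J₁,…,J_r` and summing), of
`(∏_s [t^{J_s}]f) · (∏_a [t^{I_a}]g)`. -/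
theorem prod_coeff_psComp {R : Type*} [CommRing R] (f g : PowerSeries R)
    (hf : PowerSeries.constantCoeff f = 0) (hg : PowerSeries.constantCoeff g = 0)
    (n : ℕ) (hn : 0 < n) (Kc : Composition n) :
    ∏ s : Fin Kc.length, PowerSeries.coeff (Kc.blocksFun s) (psComp f g) =
      ∑ x ∈ Finset.Icc 1 n, ∑ J : Composition x, ∑ I : Composition n,
        if J.length = Kc.length ∧ I.length = x ∧
            (I.blocks.splitWrtComposition J).map List.sum = Kc.blocks then
          (∏ s : Fin J.length, PowerSeries.coeff (J.blocksFun s) f) *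
            (∏ a : Fin I.length, PowerSeries.coeff (I.blocksFun a) g)
        else 0 :=
  prod_coeff_psComp_general f g hg n hn Kc
end

section
/- For fixed positive integers a and b, and for all u₁, u₂, j ∈ ℕ, the map sending a triple (A, U₁, U₂) — where A is a j×(u₁+u₂) quasi-shuffle matrix in QSH(u₁,u₂;j), U₁ is a one-hot composition matrix in brew(u₁,a), and U₂ is in brew(u₂,b) — to the matrix product A·diag(U₁,U₂) ∈ ℕ₀^{j×(a+b)}, is injective. -/
/-- `IsBrew M`: `M` is the one-hot matrix encoding of a composition, i.e. its columns are
standard basis vectors `e_{ι j}` with `ι` weakly increasing, surjective, and with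
consecutive increments at most `1`. -/
def IsBrew {v ℓ : ℕ} (M : Matrix (Fin v) (Fin ℓ) ℕ) : Prop :=
  ∃ ι : Fin ℓ → Fin v, Monotone ι ∧ Function.Surjective ι ∧
    (∀ (j : ℕ) (h : j + 1 < ℓ),
      ((ι ⟨j + 1, h⟩ : Fin v) : ℕ) ≤ ((ι ⟨j, Nat.lt_of_succ_lt h⟩ : Fin v) : ℕ) + 1) ∧
    M = Matrix.of fun i j => if i = ι j then 1 else 0

/-- `IsQSH M` (for `M` of size `j × (m+s)`): the columns of `M` are standard basis vectors
`e_{ι₁},…,e_{ι_m},e_{κ₁},…,e_{κ_s}` with `ι` and `κ` strictly increasing, and `M` is right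
invertible (every standard basis vector occurs as a column). -/
def IsQSH {m s j : ℕ} (M : Matrix (Fin j) (Fin (m + s)) ℕ) : Prop :=
  ∃ ι : Fin m → Fin j, ∃ κ : Fin s → Fin j, StrictMono ι ∧ StrictMono κ ∧
    Function.Surjective (Sum.elim ι κ) ∧
    M = Matrix.of fun r c =>
      Sum.elim (fun p => if r = ι p then 1 else 0) (fun q => if r = κ q then 1 else 0)
        (finSumFinEquiv.symm c)

/-- `IsSH M`: `M` is a shuffle permutation matrix
`[e_{ι₁} ⋯ e_{ι_a} e_{κ₁} ⋯ e_{κ_b}]` with `ι`, `κ` strictly increasing. -/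
def IsSH {a b : ℕ} (M : Matrix (Fin (a + b)) (Fin (a + b)) ℕ) : Prop :=
  ∃ ι : Fin a → Fin (a + b), ∃ κ : Fin b → Fin (a + b), StrictMono ι ∧ StrictMono κ ∧
    Function.Bijective (Sum.elim ι κ) ∧
    M = Matrix.of fun r c =>
      Sum.elim (fun p => if r = ι p then 1 else 0) (fun q => if r = κ q then 1 else 0)
        (finSumFinEquiv.symm c)

/-- Block-diagonal concatenation `diag(U₁, U₂)` of rectangular matrices. -/
def blockDiag {u₁ u₂ a b : ℕ} (U₁ : Matrix (Fin u₁) (Fin a) ℕ)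
    (U₂ : Matrix (Fin u₂) (Fin b) ℕ) : Matrix (Fin (u₁ + u₂)) (Fin (a + b)) ℕ :=
  Matrix.reindex finSumFinEquiv finSumFinEquiv (Matrix.fromBlocks U₁ 0 0 U₂)

/-- The factorial `U!` of a brew matrix: the product of the factorials of the parts of
its corresponding composition (the parts are the row sums). -/
def brewFact {v ℓ : ℕ} (M : Matrix (Fin v) (Fin ℓ) ℕ) : ℕ :=
  ∏ i : Fin v, Nat.factorial (∑ j : Fin ℓ, M i j)
/-! All matrices involved are one-hot (column `k` is `e_{f k}` for a map `f`), and the product of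
one-hot matrices is the one-hot matrix of the composite map. So the product
`A · diag(U₁, U₂)` records the composites `ι ∘ ι₁` and `κ ∘ κ₂`. Since `ι₁` and `κ₂` are
surjective, these have the same ranges as `ι` and `κ`, and a strictly monotone map on `Fin n`
is determined by its range; injectivity of `ι` and `κ` then recovers `ι₁` and `κ₂`. -/

open Function

theorem StrictMono.eq_and_eq_of_comp_eq {α γ δ : Type*} [LinearOrder α] [WellFoundedLT α]
    [Preorder γ] {f g : α → γ} {p q : δ → α} (hf : StrictMono f) (hg : StrictMono g)
    (hp : Surjective p) (hq : Surjective q) (h : f ∘ p = g ∘ q) : f = g ∧ p = q := by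
  have hfg : f = g := (hf.range_inj hg).1 <| by rw [← hp.range_comp, h, hq.range_comp]
  subst hfg
  exact ⟨rfl, hf.injective.comp_left h⟩

section OneHot

variable {l m n : Type*} (R : Type*) [Semiring R] [DecidableEq m]

def oneHotMatrix (f : n → m) : Matrix m n R :=
  Matrix.of fun i k => if i = f k then 1 else 0

variable {R}

theorem mul_oneHotMatrix [Fintype m] (M : Matrix l m R) (f : n → m) :
    M * oneHotMatrix R f = M.submatrix id f := by
  ext i k
  simp [Matrix.mul_apply, oneHotMatrix]

theorem oneHotMatrix_mul_oneHotMatrix [Fintype m] [DecidableEq l] (f : m → l) (g : n → m) :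
    oneHotMatrix R f * oneHotMatrix R g = oneHotMatrix R (f ∘ g) :=
  mul_oneHotMatrix _ g

theorem oneHotMatrix_injective [Nontrivial R] :
    Injective (oneHotMatrix R : (n → m) → Matrix m n R) := by
  intro f g h
  funext k
  simpa [oneHotMatrix, eq_comm] using congrFun₂ h (f k) k

end OneHot

theorem blockDiag_oneHotMatrix {u₁ u₂ a b : ℕ} (f : Fin a → Fin u₁) (g : Fin b → Fin u₂) :
    blockDiag (oneHotMatrix ℕ f) (oneHotMatrix ℕ g) =
      oneHotMatrix ℕ (finSumFinEquiv ∘ Sum.map f g ∘ finSumFinEquiv.symm) := by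
  ext i k
  simp only [blockDiag, Matrix.reindex_apply, Matrix.submatrix_apply, oneHotMatrix,
    Matrix.of_apply, comp_apply, ← Equiv.symm_apply_eq]
  rcases finSumFinEquiv.symm i with i | i <;> rcases finSumFinEquiv.symm k with k | k <;> simp

theorem IsQSH.exists_eq_oneHotMatrix {m s j : ℕ} {A : Matrix (Fin j) (Fin (m + s)) ℕ}
    (hA : IsQSH A) : ∃ (ι : Fin m → Fin j) (κ : Fin s → Fin j), StrictMono ι ∧ StrictMono κ ∧
      A = oneHotMatrix ℕ (Sum.elim ι κ ∘ finSumFinEquiv.symm) := by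
  obtain ⟨ι, κ, hι, hκ, -, rfl⟩ := hA
  refine ⟨ι, κ, hι, hκ, ?_⟩
  ext r c
  obtain ⟨p | q, rfl⟩ := finSumFinEquiv.surjective c <;> simp [oneHotMatrix]

theorem IsBrew.exists_eq_oneHotMatrix {v ℓ : ℕ} {M : Matrix (Fin v) (Fin ℓ) ℕ} (hM : IsBrew M) :
    ∃ ι : Fin ℓ → Fin v, Surjective ι ∧ M = oneHotMatrix ℕ ι := by
  obtain ⟨ι, -, hι, -, rfl⟩ := hM
  exact ⟨ι, hι, rfl⟩

theorem oneHotMatrix_mul_blockDiag {u₁ u₂ a b j : ℕ} (ι : Fin u₁ → Fin j) (κ : Fin u₂ → Fin j)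
    (ι₁ : Fin a → Fin u₁) (κ₂ : Fin b → Fin u₂) :
    oneHotMatrix ℕ (Sum.elim ι κ ∘ finSumFinEquiv.symm) *
        blockDiag (oneHotMatrix ℕ ι₁) (oneHotMatrix ℕ κ₂) =
      oneHotMatrix ℕ (Sum.elim (ι ∘ ι₁) (κ ∘ κ₂) ∘ finSumFinEquiv.symm) := by
  rw [blockDiag_oneHotMatrix, oneHotMatrix_mul_oneHotMatrix]
  congr 1
  ext c
  obtain ⟨p | q, rfl⟩ := finSumFinEquiv.surjective c <;> simp

theorem M_injective_general (a b : ℕ) (u₁ u₂ j : ℕ)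
    (A A' : Matrix (Fin j) (Fin (u₁ + u₂)) ℕ)
    (U₁ U₁' : Matrix (Fin u₁) (Fin a) ℕ) (U₂ U₂' : Matrix (Fin u₂) (Fin b) ℕ)
    (hA : IsQSH A) (hA' : IsQSH A')
    (hU₁ : IsBrew U₁) (hU₁' : IsBrew U₁') (hU₂ : IsBrew U₂) (hU₂' : IsBrew U₂')
    (h : A * blockDiag U₁ U₂ = A' * blockDiag U₁' U₂') :
    A = A' ∧ U₁ = U₁' ∧ U₂ = U₂' := by
  obtain ⟨ι, κ, hι, hκ, rfl⟩ := hA.exists_eq_oneHotMatrix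
  obtain ⟨ι', κ', hι', hκ', rfl⟩ := hA'.exists_eq_oneHotMatrix
  obtain ⟨ι₁, hι₁, rfl⟩ := hU₁.exists_eq_oneHotMatrix
  obtain ⟨ι₁', hι₁', rfl⟩ := hU₁'.exists_eq_oneHotMatrix
  obtain ⟨κ₂, hκ₂, rfl⟩ := hU₂.exists_eq_oneHotMatrix
  obtain ⟨κ₂', hκ₂', rfl⟩ := hU₂'.exists_eq_oneHotMatrix
  rw [oneHotMatrix_mul_blockDiag, oneHotMatrix_mul_blockDiag] at h
  obtain ⟨h₁, h₂⟩ := Sum.elim_eq_iff.mp <|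
    finSumFinEquiv.symm.surjective.injective_comp_right (oneHotMatrix_injective h)
  obtain ⟨rfl, rfl⟩ := hι.eq_and_eq_of_comp_eq hι' hι₁ hι₁' h₁
  obtain ⟨rfl, rfl⟩ := hκ.eq_and_eq_of_comp_eq hκ' hκ₂ hκ₂' h₂
  exact ⟨rfl, rfl, rfl⟩

/-- the map `(A, U₁, U₂) ↦ A · diag(U₁, U₂)` from
`QSH(u₁,u₂;j) × brew(u₁,a) × brew(u₂,b)` to `ℕ₀^{j×(a+b)}` is injective. -/
theorem M_injective (a b : ℕ) (ha : 0 < a) (hb : 0 < b) (u₁ u₂ j : ℕ)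
    (A A' : Matrix (Fin j) (Fin (u₁ + u₂)) ℕ)
    (U₁ U₁' : Matrix (Fin u₁) (Fin a) ℕ) (U₂ U₂' : Matrix (Fin u₂) (Fin b) ℕ)
    (hA : IsQSH A) (hA' : IsQSH A')
    (hU₁ : IsBrew U₁) (hU₁' : IsBrew U₁') (hU₂ : IsBrew U₂) (hU₂' : IsBrew U₂')
    (h : A * blockDiag U₁ U₂ = A' * blockDiag U₁' U₂') :
    A = A' ∧ U₁ = U₁' ∧ U₂ = U₂' :=
  M_injective_general a b u₁ u₂ j A A' U₁ U₁' U₂ U₂' hA hA' hU₁ hU₁' hU₂ hU₂' h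
end

section
/- For fixed positive integers a, b, j, consider the map N_j sending (U, P) ∈ brew(j, a+b) × SH(a,b) to the matrix product U·P ∈ ℕ₀^{j×(a+b)}. If U·P = U'·P' for U, U' ∈ brew(j,a+b) and P, P' ∈ SH(a,b), then U = U'. In other words, for each W in the image of N_j there is a unique U such that N_j(U,P) = W for some P. -/
/-! Multiplying on the right by a permutation matrix preserves row sums. The row sums of a brew
matrix are the fibre sizes of its monotone index map, and a monotone map on `Fin n` is determined
by its fibre sizes, being the sorted list of its values. -/

open Finset Matrix

theorem Monotone.eq_of_card_fiber_eq {n : ℕ} {α : Type*} [LinearOrder α] {f g : Fin n → α}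
    (hf : Monotone f) (hg : Monotone g) (h : ∀ a, #{k | f k = a} = #{k | g k = a}) :
    f = g := by
  refine List.ofFn_injective (List.Perm.eq_of_sortedLE hf.sortedLE_ofFn hg.sortedLE_ofFn ?_)
  rw [← Multiset.coe_eq_coe, ← Fin.univ_val_map, ← Fin.univ_val_map]
  ext a
  simp only [Multiset.count_map, ← Finset.filter_val, Finset.card_val, eq_comm (a := a)]
  exact h a

theorem Matrix.oneHot_mulVec_one {m n : Type*} [Fintype n] [DecidableEq m] (ι : n → m) :
    (of fun i k => if i = ι k then 1 else 0 : Matrix m n ℕ) *ᵥ 1 = fun i => #{k | ι k = i} := by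
  ext i
  simp [mulVec, dotProduct, eq_comm]

theorem IsSH.mulVec_one {a b : ℕ} {P : Matrix (Fin (a + b)) (Fin (a + b)) ℕ} (hP : IsSH P) :
    P *ᵥ 1 = 1 := by
  obtain ⟨ι, κ, -, -, hbij, rfl⟩ := hP
  ext r
  have hentry : ∀ x : Fin a ⊕ Fin b, Sum.elim (fun p => if r = ι p then 1 else 0)
      (fun q => if r = κ q then 1 else 0) x = if r = Sum.elim ι κ x then (1 : ℕ) else 0 := by
    rintro (p | q) <;> rfl
  simpa [mulVec, dotProduct, hentry] using
    (hbij.comp finSumFinEquiv.symm.bijective).sum_comp fun y => if r = y then (1 : ℕ) else 0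

theorem N_determines_U_general (a b j : ℕ)
    (U U' : Matrix (Fin j) (Fin (a + b)) ℕ) (P P' : Matrix (Fin (a + b)) (Fin (a + b)) ℕ)
    (hU : IsBrew U) (hU' : IsBrew U') (hP : IsSH P) (hP' : IsSH P')
    (h : U * P = U' * P') : U = U' := by
  have hrowSums : U *ᵥ 1 = U' *ᵥ 1 :=
    calc U *ᵥ 1 = (U * P) *ᵥ 1 := by rw [← mulVec_mulVec, hP.mulVec_one]
      _ = (U' * P') *ᵥ 1 := by rw [h]
      _ = U' *ᵥ 1 := by rw [← mulVec_mulVec, hP'.mulVec_one]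
  obtain ⟨ι, hι, -, -, rfl⟩ := hU
  obtain ⟨ι', hι', -, -, rfl⟩ := hU'
  rw [oneHot_mulVec_one, oneHot_mulVec_one] at hrowSums
  rw [hι.eq_of_card_fiber_eq hι' (congrFun hrowSums)]

/-- if `U·P = U'·P'` with `U, U' ∈ brew(j, a+b)` and `P, P' ∈ SH(a,b)`,
then `U = U'`; i.e. each element of the image of `N_j : (U,P) ↦ U·P` determines `U`. -/
theorem N_determines_U (a b j : ℕ) (ha : 0 < a) (hb : 0 < b) (hj : 0 < j)
    (U U' : Matrix (Fin j) (Fin (a + b)) ℕ) (P P' : Matrix (Fin (a + b)) (Fin (a + b)) ℕ)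
    (hU : IsBrew U) (hU' : IsBrew U') (hP : IsSH P) (hP' : IsSH P')
    (h : U * P = U' * P') : U = U' :=
  N_determines_U_general a b j U U' P P' hU hU' hP hP' h
end

section
/- For fixed positive integers a, b, j: the image of the map N_j : brew(j,a+b) × SH(a,b) → ℕ₀^{j×(a+b)}, (U,P) ↦ UP, equals the disjoint union over u₁, u₂ ∈ ℕ of the images of the maps M_{u₁,u₂,j} : QSH(u₁,u₂;j) × brew(u₁,a) × brew(u₂,b) → ℕ₀^{j×(a+b)}, (A,U₁,U₂) ↦ A·diag(U₁,U₂). -/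
/-- The image of `N_j : brew(j,a+b) × SH(a,b) → ℕ₀^{j×(a+b)}`, `(U,P) ↦ U·P`. -/
def NIm (a b j : ℕ) : Set (Matrix (Fin j) (Fin (a + b)) ℕ) :=
  {W | ∃ U P, IsBrew U ∧ IsSH P ∧ W = U * P}

/-- The image of `M_{u₁,u₂,j} : QSH(u₁,u₂;j) × brew(u₁,a) × brew(u₂,b) → ℕ₀^{j×(a+b)}`,
`(A,U₁,U₂) ↦ A · diag(U₁,U₂)`. -/
def MIm (a b j u₁ u₂ : ℕ) : Set (Matrix (Fin j) (Fin (a + b)) ℕ) :=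
  {W | ∃ (A : Matrix (Fin j) (Fin (u₁ + u₂)) ℕ) (U₁ : Matrix (Fin u₁) (Fin a) ℕ)
        (U₂ : Matrix (Fin u₂) (Fin b) ℕ),
      IsQSH A ∧ IsBrew U₁ ∧ IsBrew U₂ ∧ W = A * blockDiag U₁ U₂}

/-!
Every matrix here is one-hot, `oneHot F` with column `c` equal to `e_{F c}`, and it determines `F`.
Both sides consist exactly of the matrices `oneHot (Fin.append g h)` with `g`, `h` monotone and
jointly surjective. For `U · P`, `g` and `h` are `U`'s function read along the two strictly
increasing halves of the shuffle `P`; conversely `P` comes from merging `g` and `h` into one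
sorted sequence. For `A · diag(U₁, U₂)`, `g` and `h` are the halves of `A` composed with `U₁`,
`U₂`; conversely one factors `g` and `h` through their images. Then `u₁`, `u₂` are the sizes of
the images of `g` and `h`, so the matrix determines them, which gives disjointness.
-/

open Function

theorem Fin.comp_append {α β : Type*} {a b : ℕ} (f : α → β) (u : Fin a → α) (v : Fin b → α) :
    f ∘ Fin.append u v = Fin.append (f ∘ u) (f ∘ v) := by
  funext c
  induction c using Fin.addCases <;> simp

theorem Fin.append_inj_iff {α : Type*} {a b : ℕ} {u u' : Fin a → α} {v v' : Fin b → α} :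
    Fin.append u v = Fin.append u' v' ↔ u = u' ∧ v = v' :=
  ⟨fun h => ⟨funext fun p => by simpa using congrFun h (Fin.castAdd b p),
    funext fun q => by simpa using congrFun h (Fin.natAdd a q)⟩, by rintro ⟨rfl, rfl⟩; rfl⟩

theorem Fin.append_comp_append {α : Type*} {a b u₁ u₂ : ℕ} (ι : Fin u₁ → α) (κ : Fin u₂ → α)
    (μ₁ : Fin a → Fin u₁) (μ₂ : Fin b → Fin u₂) :
    Fin.append ι κ ∘ Fin.append (Fin.castAdd u₂ ∘ μ₁) (Fin.natAdd u₁ ∘ μ₂) =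
      Fin.append (ι ∘ μ₁) (κ ∘ μ₂) := by
  funext c
  induction c using Fin.addCases <;> simp

theorem Fin.val_succ_apply_le_of_monotone_of_surjective {l v : ℕ} {μ : Fin l → Fin v}
    (hm : Monotone μ) (hs : Surjective μ) (t : ℕ) (ht : t + 1 < l) :
    (μ ⟨t + 1, ht⟩ : ℕ) ≤ μ ⟨t, by omega⟩ + 1 := by
  by_contra! hgap
  obtain ⟨s, hs⟩ := hs ⟨μ ⟨t, by omega⟩ + 1, by omega⟩
  rcases le_or_gt s ⟨t, by omega⟩ with hst | hts
  · have := Fin.le_def.1 (hm hst)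
    simp [hs] at this
  · have := Fin.le_def.1 (hm (show (⟨t + 1, ht⟩ : Fin l) ≤ s from hts))
    simp [hs] at this
    omega

theorem Monotone.exists_strictMono_comp_surjective {α β : Type*} [Fintype α] [Preorder α]
    [LinearOrder β] {g : α → β} (hg : Monotone g) :
    ∃ (ι : Fin (Nat.card (Set.range g)) → β) (μ : α → Fin (Nat.card (Set.range g))),
      StrictMono ι ∧ Monotone μ ∧ Surjective μ ∧ ι ∘ μ = g := by
  classical
  let s := Finset.univ.image g
  have hs : s.card = Nat.card (Set.range g) := by
    rw [Nat.card_eq_card_toFinset, Set.toFinset_range]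
  let e := s.orderIsoOfFin hs
  have mem (x : α) : g x ∈ s := Finset.mem_image_of_mem g (Finset.mem_univ x)
  refine ⟨Subtype.val ∘ e, fun x => e.symm ⟨g x, mem x⟩, (Subtype.strictMono_coe _).comp
    e.strictMono, fun x y hxy => e.symm.monotone (Subtype.mk_le_mk.2 (hg hxy)), fun t => ?_,
    funext fun x => by simp only [comp_apply, OrderIso.apply_symm_apply]⟩
  obtain ⟨x, -, hx⟩ := Finset.mem_image.1 (e t).2
  exact ⟨x, e.symm_apply_eq.2 (Subtype.ext hx)⟩

theorem exists_shuffle_of_monotone {β : Type*} [LinearOrder β] {a b : ℕ} {g : Fin a → β}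
    {h : Fin b → β} (hg : Monotone g) (hh : Monotone h) :
    ∃ (ι : Fin a → Fin (a + b)) (κ : Fin b → Fin (a + b)) (μ : Fin (a + b) → β),
      StrictMono ι ∧ StrictMono κ ∧ Bijective (Sum.elim ι κ) ∧ Monotone μ ∧
      μ ∘ ι = g ∧ μ ∘ κ = h := by
  classical
  -- Sort all `a + b` values, breaking ties by putting the `g`-entries first, each in order.
  let key : Fin a ⊕ Fin b → β ×ₗ (Fin a ⊕ₗ Fin b) := fun x => toLex (Sum.elim g h x, toLex x)
  have key_inj : Injective key := fun x y hxy => by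
    simpa [key] using congrArg (fun z => (ofLex z).2) hxy
  let s := Finset.univ.image key
  have hs : s.card = a + b := by simp [s, Finset.card_image_of_injective _ key_inj]
  let e := s.orderIsoOfFin hs
  let π : Fin a ⊕ Fin b → Fin (a + b) :=
    fun x => e.symm ⟨key x, Finset.mem_image_of_mem key (Finset.mem_univ x)⟩
  have π_lt {x y} (hxy : key x < key y) : π x < π y := e.symm.strictMono hxy
  let μ : Fin (a + b) → β := fun t => (ofLex (e t : β ×ₗ (Fin a ⊕ₗ Fin b))).1
  have μ_comp_π : μ ∘ π = Sum.elim g h := funext fun x => by simp [μ, π, key]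
  refine ⟨π ∘ Sum.inl, π ∘ Sum.inr, μ,
    fun p q hpq => π_lt (Prod.Lex.toLex_strictMono
      (Prod.mk_lt_mk_of_le_of_lt (hg hpq.le) (Sum.Lex.inl_strictMono hpq))),
    fun p q hpq => π_lt (Prod.Lex.toLex_strictMono
      (Prod.mk_lt_mk_of_le_of_lt (hh hpq.le) (Sum.Lex.inr_strictMono hpq))), ?_,
    Prod.Lex.monotone_fst_ofLex.comp ((Subtype.mono_coe _).comp e.monotone),
    by rw [← comp_assoc, μ_comp_π, Sum.elim_comp_inl],
    by rw [← comp_assoc, μ_comp_π, Sum.elim_comp_inr]⟩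
  rw [Sum.elim_comp_inl_inr, Fintype.bijective_iff_injective_and_card]
  exact ⟨fun x y hxy => key_inj (congrArg Subtype.val (e.symm.injective hxy)), by simp⟩

section OneHot

variable {R m n : Type*} [DecidableEq m]

def oneHot [Zero R] [One R] (f : n → m) : Matrix m n R :=
  Matrix.of fun i c => if i = f c then 1 else 0

theorem oneHot_mul_oneHot {l : Type*} [NonAssocSemiring R] [Fintype n] [DecidableEq n]
    (f : n → m) (g : l → n) :
    (oneHot f : Matrix m n R) * (oneHot g : Matrix n l R) = oneHot (f ∘ g) := by
  ext i c
  simp [oneHot, Matrix.mul_apply]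

theorem oneHot_injective [Zero R] [One R] [NeZero (1 : R)] :
    Injective (oneHot : (n → m) → Matrix m n R) := fun f g hfg => funext fun c => by
  simpa [oneHot] using congrFun (congrFun hfg (f c)) c

end OneHot

theorem of_sumElim_ite_eq_oneHot {j a b : ℕ} (ι : Fin a → Fin j) (κ : Fin b → Fin j) :
    (Matrix.of fun r c => Sum.elim (fun p => if r = ι p then 1 else 0)
      (fun q => if r = κ q then 1 else 0) (finSumFinEquiv.symm c) : Matrix _ _ ℕ) =
      oneHot (Fin.append ι κ) := by
  ext r c
  induction c using Fin.addCases <;> simp [oneHot]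

theorem blockDiag_oneHot {u₁ u₂ a b : ℕ} (μ₁ : Fin a → Fin u₁) (μ₂ : Fin b → Fin u₂) :
    blockDiag (oneHot μ₁) (oneHot μ₂) =
      oneHot (Fin.append (Fin.castAdd u₂ ∘ μ₁) (Fin.natAdd u₁ ∘ μ₂)) := by
  ext r c
  induction r using Fin.addCases <;> induction c using Fin.addCases <;>
    simp [blockDiag, oneHot, Fin.ext_iff] <;> omega

theorem isBrew_iff {v l : ℕ} {M : Matrix (Fin v) (Fin l) ℕ} :
    IsBrew M ↔ ∃ μ : Fin l → Fin v, Monotone μ ∧ Surjective μ ∧ M = oneHot μ :=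
  ⟨fun ⟨μ, hm, hs, _, hM⟩ => ⟨μ, hm, hs, hM⟩, fun ⟨μ, hm, hs, hM⟩ =>
    ⟨μ, hm, hs, Fin.val_succ_apply_le_of_monotone_of_surjective hm hs, hM⟩⟩

theorem isQSH_iff {m s j : ℕ} {A : Matrix (Fin j) (Fin (m + s)) ℕ} :
    IsQSH A ↔ ∃ (ι : Fin m → Fin j) (κ : Fin s → Fin j), StrictMono ι ∧ StrictMono κ ∧
      Surjective (Sum.elim ι κ) ∧ A = oneHot (Fin.append ι κ) := by
  simp only [IsQSH, of_sumElim_ite_eq_oneHot]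

theorem isSH_iff {a b : ℕ} {P : Matrix (Fin (a + b)) (Fin (a + b)) ℕ} :
    IsSH P ↔ ∃ (ι : Fin a → Fin (a + b)) (κ : Fin b → Fin (a + b)), StrictMono ι ∧
      StrictMono κ ∧ Bijective (Sum.elim ι κ) ∧ P = oneHot (Fin.append ι κ) := by
  simp only [IsSH, of_sumElim_ite_eq_oneHot]

theorem mem_NIm_iff {a b j : ℕ} {W : Matrix (Fin j) (Fin (a + b)) ℕ} :
    W ∈ NIm a b j ↔ ∃ (g : Fin a → Fin j) (h : Fin b → Fin j), Monotone g ∧ Monotone h ∧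
      Surjective (Sum.elim g h) ∧ W = oneHot (Fin.append g h) := by
  -- `NIm` elaborates `U * P` with the (defeq) `CStarMatrix` multiplication, so this is used
  -- through `exact` rather than `rw`.
  have mul_eq (μ : Fin (a + b) → Fin j) (ι : Fin a → Fin (a + b)) (κ : Fin b → Fin (a + b)) :
      (oneHot μ : Matrix (Fin j) (Fin (a + b)) ℕ) * (oneHot (Fin.append ι κ) : Matrix _ _ ℕ) =
        oneHot (Fin.append (μ ∘ ι) (μ ∘ κ)) := by
    rw [oneHot_mul_oneHot, Fin.comp_append]
  constructor
  · rintro ⟨U, P, hU, hP, rfl⟩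
    obtain ⟨μ, hμ, hμs, rfl⟩ := isBrew_iff.1 hU
    obtain ⟨ι, κ, hι, hκ, hικ, rfl⟩ := isSH_iff.1 hP
    refine ⟨μ ∘ ι, μ ∘ κ, hμ.comp hι.monotone, hμ.comp hκ.monotone, ?_, ?_⟩
    · rw [← Sum.comp_elim]
      exact hμs.comp hικ.surjective
    · exact mul_eq μ ι κ
  · rintro ⟨g, h, hg, hh, hgh, rfl⟩
    obtain ⟨ι, κ, μ, hι, hκ, hικ, hμ, rfl, rfl⟩ := exists_shuffle_of_monotone hg hh
    rw [← Sum.comp_elim] at hgh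
    exact ⟨oneHot μ, oneHot (Fin.append ι κ), isBrew_iff.2 ⟨μ, hμ, hgh.of_comp, rfl⟩,
      isSH_iff.2 ⟨ι, κ, hι, hκ, hικ, rfl⟩, (mul_eq μ ι κ).symm⟩

theorem mem_MIm_iff {a b j u₁ u₂ : ℕ} {W : Matrix (Fin j) (Fin (a + b)) ℕ} :
    W ∈ MIm a b j u₁ u₂ ↔ ∃ (g : Fin a → Fin j) (h : Fin b → Fin j), Monotone g ∧ Monotone h ∧
      Surjective (Sum.elim g h) ∧ Nat.card (Set.range g) = u₁ ∧ Nat.card (Set.range h) = u₂ ∧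
      W = oneHot (Fin.append g h) := by
  constructor
  · rintro ⟨A, U₁, U₂, hA, hU₁, hU₂, rfl⟩
    obtain ⟨ι, κ, hι, hκ, hικ, rfl⟩ := isQSH_iff.1 hA
    obtain ⟨μ₁, hμ₁, hμ₁s, rfl⟩ := isBrew_iff.1 hU₁
    obtain ⟨μ₂, hμ₂, hμ₂s, rfl⟩ := isBrew_iff.1 hU₂
    refine ⟨ι ∘ μ₁, κ ∘ μ₂, hι.monotone.comp hμ₁, hκ.monotone.comp hμ₂, ?_, ?_, ?_, ?_⟩
    · rw [← Sum.elim_comp_map]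
      exact hικ.comp (Sum.map_surjective.2 ⟨hμ₁s, hμ₂s⟩)
    · rw [hμ₁s.range_comp, Nat.card_range_of_injective hι.injective, Nat.card_eq_fintype_card,
        Fintype.card_fin]
    · rw [hμ₂s.range_comp, Nat.card_range_of_injective hκ.injective, Nat.card_eq_fintype_card,
        Fintype.card_fin]
    · rw [blockDiag_oneHot, oneHot_mul_oneHot, Fin.append_comp_append]
  · rintro ⟨g, h, hg, hh, hgh, rfl, rfl, rfl⟩
    obtain ⟨ι, μ₁, hι, hμ₁, hμ₁s, hιμ₁⟩ := hg.exists_strictMono_comp_surjective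
    obtain ⟨κ, μ₂, hκ, hμ₂, hμ₂s, hκμ₂⟩ := hh.exists_strictMono_comp_surjective
    rw [← hιμ₁, ← hκμ₂, ← Sum.elim_comp_map] at hgh
    refine ⟨oneHot (Fin.append ι κ), oneHot μ₁, oneHot μ₂,
      isQSH_iff.2 ⟨ι, κ, hι, hκ, hgh.of_comp, rfl⟩, isBrew_iff.2 ⟨μ₁, hμ₁, hμ₁s, rfl⟩,
      isBrew_iff.2 ⟨μ₂, hμ₂, hμ₂s, rfl⟩, ?_⟩
    rw [blockDiag_oneHot, oneHot_mul_oneHot, Fin.append_comp_append, hιμ₁, hκμ₂]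

theorem NIm_eq_disjoint_union_MIm_general (a b j : ℕ) :
    (NIm a b j = ⋃ (u₁ : ℕ) (u₂ : ℕ), MIm a b j u₁ u₂) ∧
    (∀ u₁ u₂ u₁' u₂' : ℕ, (u₁, u₂) ≠ (u₁', u₂') →
      Disjoint (MIm a b j u₁ u₂) (MIm a b j u₁' u₂')) := by
  refine ⟨Set.ext fun W => ?_, fun u₁ u₂ u₁' u₂' hne => Set.disjoint_left.2 fun W hW hW' => ?_⟩
  · simp only [Set.mem_iUnion, mem_NIm_iff, mem_MIm_iff]
    constructor
    · rintro ⟨g, h, hg, hh, hgh, rfl⟩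
      exact ⟨_, _, g, h, hg, hh, hgh, rfl, rfl, rfl⟩
    · rintro ⟨-, -, g, h, hg, hh, hgh, -, -, rfl⟩
      exact ⟨g, h, hg, hh, hgh, rfl⟩
  · obtain ⟨g, h, -, -, -, rfl, rfl, rfl⟩ := mem_MIm_iff.1 hW
    obtain ⟨g', h', -, -, -, rfl, rfl, hgh'⟩ := mem_MIm_iff.1 hW'
    obtain ⟨rfl, rfl⟩ := Fin.append_inj_iff.1 (oneHot_injective hgh')
    exact hne rfl

/-- the image of `N_j` is the disjoint union over `u₁, u₂ ∈ ℕ` of the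
images of the maps `M_{u₁,u₂,j}`. -/
theorem NIm_eq_disjoint_union_MIm (a b j : ℕ) (ha : 0 < a) (hb : 0 < b) (hj : 0 < j) :
    (NIm a b j = ⋃ (u₁ : ℕ) (u₂ : ℕ), MIm a b j u₁ u₂) ∧
    (∀ u₁ u₂ u₁' u₂' : ℕ, (u₁, u₂) ≠ (u₁', u₂') →
      Disjoint (MIm a b j u₁ u₂) (MIm a b j u₁' u₂')) :=
  NIm_eq_disjoint_union_MIm_general a b j
end

section
/- In a graded connected bialgebra H over a ℚ-algebra K, the map id − η∘ε is nilpotent for the convolution product in the sense that for each a ∈ H there exists k with (id − η∘ε)^{*k}(a) = 0; hence the Eulerian idempotent 𝔢 := Σ_{k≥1} ((−1)^{k−1}/k)(id − η∘ε)^{*k} is a well-defined linear endomorphism of H, and exp^*(𝔢) = id, i.e., Σ_{k≥0} 𝔢^{*k}/k! = id. -/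
/-!
Let `T = id − η∘ε` in the convolution algebra of `H`. The maps killing every homogeneous element
of degree `< p` form a two-sided ideal `I p`, and `I p * I q ⊆ I (p + q)` because `Δ` respects
the grading; connectedness puts `T` in `I 1`, hence `T ^ k ∈ I k`, which is the nilpotency.
The Eulerian idempotent `e` is glued from the truncated logarithms `log_q (1 + T)` on the
graded pieces `𝒜 q`, so `e ≡ log_m (1 + T)` modulo `I (m + 1)`. In `ℚ[X]` the polynomial
`exp_n (log_M (1 + X))` is congruent to `1 + X` modulo `X ^ (m + 1)` for `m ≤ M, n`, since both
solve `(1 + X) y' = y` to that order with `y(0) = 1`. Hence `exp_n e ≡ 1 + T = id` modulo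
`I (m + 1)`, and elements of degree `≤ m` do not see the difference.
-/

open TensorProduct

section ConvolutionDefs

variable (K H : Type*) [CommRing K] [Ring H] [Bialgebra K H]

/-- Convolution product of linear endomorphisms of a bialgebra:
`f * g := m ∘ (f ⊗ g) ∘ Δ`. -/
noncomputable def conv (f g : H →ₗ[K] H) : H →ₗ[K] H :=
  (LinearMap.mul' K H) ∘ₗ (TensorProduct.map f g) ∘ₗ (Coalgebra.comul : H →ₗ[K] H ⊗[K] H)

/-- The unit of the convolution algebra: `η ∘ ε`. -/
noncomputable def unitCounit : H →ₗ[K] H :=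
  (Algebra.linearMap K H) ∘ₗ (Coalgebra.counit : H →ₗ[K] K)

/-- Convolution powers, with `f^{*0} = η∘ε` (the convolution unit) and
`f^{*(k+1)} = f * f^{*k}`. -/
noncomputable def convPow (f : H →ₗ[K] H) : ℕ → (H →ₗ[K] H)
  | 0 => unitCounit K H
  | n + 1 => conv K H f (convPow f n)

end ConvolutionDefs

open Polynomial WithConv

namespace Polynomial

noncomputable def truncLog (M : ℕ) : ℚ[X] :=
  ∑ j ∈ Finset.Icc 1 M, C ((-1 : ℚ) ^ (j - 1) / j) * X ^ j

noncomputable def truncExp (n : ℕ) : ℚ[X] :=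
  ∑ k ∈ Finset.range (n + 1), C (1 / (k.factorial : ℚ)) * X ^ k

lemma truncLog_succ (M : ℕ) :
    truncLog (M + 1) = truncLog M + C ((-1 : ℚ) ^ M / (M + 1)) * X ^ (M + 1) := by
  rw [truncLog, Finset.sum_Icc_succ_top (by omega)]
  push_cast
  simp [truncLog]

lemma truncExp_succ (n : ℕ) :
    truncExp (n + 1) = truncExp n + C (1 / ((n + 1).factorial : ℚ)) * X ^ (n + 1) := by
  rw [truncExp, Finset.sum_range_succ, ← truncExp]

lemma X_dvd_truncLog (M : ℕ) : X ∣ truncLog M :=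
  Finset.dvd_sum fun _ hj => dvd_mul_of_dvd_right (dvd_pow_self X (by grind)) _

lemma X_pow_succ_dvd_truncLog_sub {m M : ℕ} (h : m ≤ M) :
    X ^ (m + 1) ∣ truncLog M - truncLog m := by
  induction M, h using Nat.le_induction with
  | base => simp
  | succ M hM ih =>
    rw [truncLog_succ, add_sub_right_comm]
    exact dvd_add ih (dvd_mul_of_dvd_right (pow_dvd_pow X (by omega)) _)

lemma one_add_X_mul_derivative_truncLog (M : ℕ) :
    (1 + X) * derivative (truncLog M) = 1 - (-X) ^ M := by
  induction M with
  | zero => simp [truncLog]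
  | succ M ih =>
    have hc : (-1 : ℚ) ^ M / (M + 1) * (M + 1) = (-1) ^ M := div_mul_cancel₀ _ (by positivity)
    rw [truncLog_succ, derivative_add, mul_add, ih, derivative_C_mul_X_pow]
    push_cast
    rw [hc]
    simp only [neg_pow (X : ℚ[X]), map_pow, map_neg, map_one]
    ring

lemma derivative_truncExp (n : ℕ) :
    derivative (truncExp n) = truncExp n - C (1 / (n.factorial : ℚ)) * X ^ n := by
  induction n with
  | zero => simp [truncExp]
  | succ n ih =>
    have hc : 1 / ((n + 1).factorial : ℚ) * (n + 1) = 1 / n.factorial := by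
      rw [Nat.factorial_succ]; push_cast; field_simp
    rw [truncExp_succ, derivative_add, ih, derivative_C_mul_X_pow]
    push_cast
    rw [hc]
    ring

lemma coeff_X_mul_derivative {R : Type*} [CommSemiring R] (p : R[X]) (d : ℕ) :
    (X * derivative p).coeff d = p.coeff d * d := by
  cases d with
  | zero => simp
  | succ d => rw [coeff_X_mul, coeff_derivative]; push_cast; ring

/-- Uniqueness for the formal ODE `(1 + X) y' = y` with `y(0) = 0`, to a given order. -/
lemma X_pow_succ_dvd_of_X_pow_dvd_one_add_X_mul_derivative_sub {F : Type*} [Field F] [CharZero F]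
    {p : F[X]} {m : ℕ} (hp : p.coeff 0 = 0) (h : X ^ m ∣ (1 + X) * derivative p - p) :
    X ^ (m + 1) ∣ p := by
  rw [X_pow_dvd_iff] at h ⊢
  intro d hd
  induction d with
  | zero => exact hp
  | succ d ih =>
    have hrec := h d (by omega)
    rw [add_mul, one_mul, coeff_sub, coeff_add, coeff_X_mul_derivative, coeff_derivative,
      ih (by omega)] at hrec
    simpa [Nat.cast_add_one_ne_zero] using hrec

lemma X_pow_succ_dvd_truncExp_comp_truncLog_sub {m M n : ℕ} (hM : m ≤ M) (hn : m ≤ n) :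
    X ^ (m + 1) ∣ (truncExp n).comp (truncLog M) - (1 + X) := by
  set L := truncLog M
  set E := (truncExp n).comp L
  have hL0 : L.eval 0 = 0 := by
    rw [← coeff_zero_eq_eval_zero, ← X_dvd_iff]; exact X_dvd_truncLog M
  have hLn : X ^ m ∣ L ^ n :=
    (pow_dvd_pow X hn).trans (pow_dvd_pow_of_dvd (X_dvd_truncLog M) n)
  have hE : derivative E = (E - C (1 / (n.factorial : ℚ)) * L ^ n) * derivative L := by
    rw [derivative_comp, derivative_truncExp, mul_comm]
    simp [E]
  have hode : (1 + X) * derivative (E - (1 + X)) - (E - (1 + X))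
      = -(C (1 / (n.factorial : ℚ)) * L ^ n)
        - (-X) ^ M * (E - C (1 / (n.factorial : ℚ)) * L ^ n) := by
    rw [derivative_sub, hE, derivative_add, derivative_one, derivative_X]
    linear_combination (E - C (1 / (n.factorial : ℚ)) * L ^ n) * one_add_X_mul_derivative_truncLog M
  refine X_pow_succ_dvd_of_X_pow_dvd_one_add_X_mul_derivative_sub ?_ ?_
  · simp [coeff_zero_eq_eval_zero, E, hL0, truncExp, eval_finsetSum, Finset.sum_range_succ']
  · rw [hode, neg_pow]
    exact dvd_sub (dvd_neg.mpr (dvd_mul_of_dvd_right hLn _))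
      (dvd_mul_of_dvd_left (dvd_mul_of_dvd_right (pow_dvd_pow X hM) _) _)

end Polynomial

namespace TwoSidedIdeal

variable {R A : Type*} [CommSemiring R] [Ring A] [Algebra R A] (I : TwoSidedIdeal A)

lemma aeval_mem_of_X_pow_dvd {t : A} {k : ℕ} (ht : t ^ k ∈ I) {p : R[X]} (hp : X ^ k ∣ p) :
    aeval t p ∈ I := by
  obtain ⟨q, rfl⟩ := hp
  rw [map_mul, map_pow, aeval_X]
  exact I.mul_mem_right _ _ ht

lemma aeval_sub_aeval_mem {x y : A} (h : x - y ∈ I) (p : R[X]) :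
    aeval x p - aeval y p ∈ I := by
  rw [← I.rel_iff, ← RingCon.eq] at h ⊢
  have hx := aeval_algHom_apply (I.ringCon.mkₐ R) x p
  have hy := aeval_algHom_apply (I.ringCon.mkₐ R) y p
  simp only [RingCon.mkₐ_apply] at hx hy
  rw [← hx, ← hy, h]

lemma aeval_truncExp_sub_one_add_mem [Algebra ℚ A] {t e : A} {m M n : ℕ} (hM : m ≤ M)
    (hn : m ≤ n) (ht : t ^ (m + 1) ∈ I) (he : e - aeval t (truncLog M) ∈ I) :
    aeval e (truncExp n) - (1 + t) ∈ I := by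
  have hexp := I.aeval_mem_of_X_pow_dvd ht (X_pow_succ_dvd_truncExp_comp_truncLog_sub hM hn)
  rw [map_sub, aeval_comp, map_add, map_one, aeval_X] at hexp
  simpa using I.add_mem (I.aeval_sub_aeval_mem he (truncExp n)) hexp

end TwoSidedIdeal

theorem DirectSum.IsInternal.exists_linearMap_eq {ι R M N : Type*} [DecidableEq ι] [Semiring R]
    [AddCommMonoid M] [Module R M] [AddCommMonoid N] [Module R N] {𝒜 : ι → Submodule R M}
    (h : IsInternal 𝒜) (g : ι → M →ₗ[R] N) : ∃ e : M →ₗ[R] N, ∀ i, ∀ a ∈ 𝒜 i, e a = g i a := by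
  let := h.chooseDecomposition
  refine ⟨toModule R ι N (fun i => g i ∘ₗ (𝒜 i).subtype) ∘ₗ (decomposeLinearEquiv 𝒜).toLinearMap,
    fun i a ha => ?_⟩
  simp [decomposeLinearEquiv_apply, decompose_of_mem 𝒜 ha, ← lof_eq_of R]

section Graded

variable {K H : Type*} [CommRing K] [Ring H] [Bialgebra K H]

def IsGradedComul (𝒜 : ℕ → Submodule K H) : Prop :=
  ∀ n, ∀ x ∈ 𝒜 n, (Coalgebra.comul : H →ₗ[K] H ⊗[K] H) x ∈
    ⨆ (p : ℕ × ℕ) (_ : p.1 + p.2 = n),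
      LinearMap.range (TensorProduct.map (𝒜 p.1).subtype (𝒜 p.2).subtype)

variable {𝒜 : ℕ → Submodule K H}

lemma IsGradedComul.convMul_apply_eq_zero (h𝒜 : IsGradedComul 𝒜) {n : ℕ} {a : H}
    (ha : a ∈ 𝒜 n) {f g : WithConv (H →ₗ[K] H)}
    (hfg : ∀ i j, i + j = n → ∀ x ∈ 𝒜 i, ∀ y ∈ 𝒜 j, f x * g y = 0) : (f * g) a = 0 := by
  suffices h : ⨆ (p : ℕ × ℕ) (_ : p.1 + p.2 = n),
      LinearMap.range (TensorProduct.map (𝒜 p.1).subtype (𝒜 p.2).subtype) ≤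
      LinearMap.ker (LinearMap.mul' K H ∘ₗ TensorProduct.map f.ofConv g.ofConv) from
    h (h𝒜 n a ha)
  refine iSup₂_le fun p hp => LinearMap.range_le_ker_iff.mpr (TensorProduct.ext' fun x y => ?_)
  exact hfg p.1 p.2 hp x x.2 y y.2

lemma IsGradedComul.convMul_apply_eq_zero_of_lt (h𝒜 : IsGradedComul 𝒜) {p q : ℕ}
    {f g : WithConv (H →ₗ[K] H)} (hf : ∀ i < p, ∀ x ∈ 𝒜 i, f x = 0)
    (hg : ∀ j < q, ∀ y ∈ 𝒜 j, g y = 0) : ∀ n < p + q, ∀ a ∈ 𝒜 n, (f * g) a = 0 := by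
  refine fun n hn a ha => h𝒜.convMul_apply_eq_zero ha fun i j hij x hx y hy => ?_
  rcases lt_or_ge i p with hi | hi
  · rw [hf i hi x hx, zero_mul]
  · rw [hg j (by omega) y hy, mul_zero]

variable (𝒜) in
noncomputable def vanishingIdeal (h𝒜 : IsGradedComul 𝒜) (p : ℕ) :
    TwoSidedIdeal (WithConv (H →ₗ[K] H)) :=
  .mk' {f | ∀ q < p, ∀ a ∈ 𝒜 q, f a = 0} (by simp)
    (fun hf hg q hq a ha => by simp [hf q hq a ha, hg q hq a ha])
    (fun hf q hq a ha => by simp [hf q hq a ha])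
    (fun hg => by simpa using h𝒜.convMul_apply_eq_zero_of_lt (p := 0) (by simp) hg)
    (fun hf => h𝒜.convMul_apply_eq_zero_of_lt (q := 0) hf (by simp))

variable (h𝒜 : IsGradedComul 𝒜)

lemma mem_vanishingIdeal {p : ℕ} {f : WithConv (H →ₗ[K] H)} :
    f ∈ vanishingIdeal 𝒜 h𝒜 p ↔ ∀ q < p, ∀ a ∈ 𝒜 q, f a = 0 :=
  TwoSidedIdeal.mem_mk' ..

lemma vanishingIdeal_antitone : Antitone (vanishingIdeal 𝒜 h𝒜) := fun _ _ hpp' _ hf =>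
  (mem_vanishingIdeal h𝒜).mpr fun q hq => (mem_vanishingIdeal h𝒜).mp hf q (by omega)

lemma mul_mem_vanishingIdeal {p q : ℕ} {f g : WithConv (H →ₗ[K] H)}
    (hf : f ∈ vanishingIdeal 𝒜 h𝒜 p) (hg : g ∈ vanishingIdeal 𝒜 h𝒜 q) :
    f * g ∈ vanishingIdeal 𝒜 h𝒜 (p + q) :=
  (mem_vanishingIdeal h𝒜).mpr <| h𝒜.convMul_apply_eq_zero_of_lt
    ((mem_vanishingIdeal h𝒜).mp hf) ((mem_vanishingIdeal h𝒜).mp hg)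

lemma pow_mem_vanishingIdeal {f : WithConv (H →ₗ[K] H)} (hf : f ∈ vanishingIdeal 𝒜 h𝒜 1)
    (k : ℕ) : f ^ k ∈ vanishingIdeal 𝒜 h𝒜 k := by
  induction k with
  | zero => simp [mem_vanishingIdeal]
  | succ k ih => simpa [pow_succ, add_comm] using mul_mem_vanishingIdeal h𝒜 ih hf

lemma id_sub_one_mem_vanishingIdeal (hconnected : 𝒜 0 = 1) :
    toConv LinearMap.id - 1 ∈ vanishingIdeal 𝒜 h𝒜 1 := by
  refine (mem_vanishingIdeal h𝒜).mpr fun q hq a ha => ?_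
  obtain rfl : q = 0 := by omega
  obtain ⟨c, rfl⟩ := Submodule.mem_one.mp (hconnected ▸ ha)
  simp [Algebra.algebraMap_eq_smul_one]

lemma exists_forall_mem_vanishingIdeal_apply_eq_zero (htop : ⨆ i, 𝒜 i = ⊤) (a : H) :
    ∃ p, ∀ f ∈ vanishingIdeal 𝒜 h𝒜 p, f a = 0 := by
  refine Submodule.iSup_induction 𝒜
    (motive := fun a => ∃ p, ∀ f ∈ vanishingIdeal 𝒜 h𝒜 p, f a = 0)
    (htop ▸ Submodule.mem_top) (fun i a ha => ⟨i + 1, fun f hf => ?_⟩)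
    ⟨0, fun f _ => f.ofConv.map_zero⟩ fun a b ⟨p, hp⟩ ⟨q, hq⟩ => ⟨max p q, fun f hf => ?_⟩
  · exact (mem_vanishingIdeal h𝒜).mp hf i (by omega) a ha
  · rw [map_add, hp f (vanishingIdeal_antitone h𝒜 (le_max_left p q) hf),
      hq f (vanishingIdeal_antitone h𝒜 (le_max_right p q) hf), add_zero]

end Graded

/-- Not a global instance: it would clash with `LinearMap.convAlgebra` when `H` is itself a
`ℚ`-algebra. -/
noncomputable abbrev WithConv.ratAlgebra (K H : Type*) [CommRing K] [Algebra ℚ K] [Ring H]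
    [Bialgebra K H] : Algebra ℚ (WithConv (H →ₗ[K] H)) :=
  Algebra.compHom _ (algebraMap ℚ K)

attribute [local instance] WithConv.ratAlgebra

section Eulerian

variable {K H : Type*} [CommRing K] [Ring H] [Bialgebra K H]

lemma convPow_eq_ofConv_pow (f : H →ₗ[K] H) (k : ℕ) :
    convPow K H f k = (toConv f ^ k).ofConv := by
  induction k with
  | zero => rfl
  | succ k ih => rw [pow_succ', convPow, ih]; rfl

variable [Algebra ℚ K]

lemma aeval_sum_C_mul_X_pow_apply (f : WithConv (H →ₗ[K] H)) (s : Finset ℕ) (c : ℕ → ℚ)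
    (a : H) :
    aeval f (∑ k ∈ s, C (c k) * X ^ k) a =
      ∑ k ∈ s, algebraMap ℚ K (c k) • convPow K H f.ofConv k a := by
  simp only [map_sum, map_mul, aeval_C, map_pow, aeval_X, ← Algebra.smul_def, ofConv_sum,
    LinearMap.sum_apply, convPow_eq_ofConv_pow, toConv_ofConv]
  -- `c • f` unfolds to `algebraMap ℚ K c • f`
  rfl

lemma sub_aeval_truncLog_mem_vanishingIdeal {𝒜 : ℕ → Submodule K H} (h𝒜 : IsGradedComul 𝒜)
    {t : WithConv (H →ₗ[K] H)} (ht : t ∈ vanishingIdeal 𝒜 h𝒜 1) {e : H →ₗ[K] H}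
    (he : ∀ q, ∀ a ∈ 𝒜 q, e a = aeval t (truncLog q) a) (m : ℕ) :
    toConv e - aeval t (truncLog m) ∈ vanishingIdeal 𝒜 h𝒜 (m + 1) := by
  refine (mem_vanishingIdeal h𝒜).mpr fun q hq a ha => ?_
  have hdiff := (vanishingIdeal 𝒜 h𝒜 (q + 1)).aeval_mem_of_X_pow_dvd
    (pow_mem_vanishingIdeal h𝒜 ht (q + 1)) (X_pow_succ_dvd_truncLog_sub (by omega : q ≤ m))
  rw [map_sub, mem_vanishingIdeal] at hdiff
  have := hdiff q q.lt_succ_self a ha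
  simp only [ofConv_sub, LinearMap.sub_apply, sub_eq_zero] at this ⊢
  rw [he q a ha, this]

end Eulerian

theorem eulerian_idempotent_exists_general {K H : Type*} [CommRing K] [Algebra ℚ K]
    [Ring H] [Bialgebra K H]
    (𝒜 : ℕ → Submodule K H)
    (hinternal : DirectSum.IsInternal 𝒜)
    (hconnected : 𝒜 0 = (1 : Submodule K H))
    (hcomul : ∀ n, ∀ x ∈ 𝒜 n,
      (Coalgebra.comul : H →ₗ[K] H ⊗[K] H) x ∈
        ⨆ (p : ℕ × ℕ) (_ : p.1 + p.2 = n),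
          LinearMap.range (TensorProduct.map (𝒜 p.1).subtype (𝒜 p.2).subtype)) :
    (∀ a : H, ∃ k : ℕ, 1 ≤ k ∧ ∀ k' ≥ k,
        convPow K H (LinearMap.id - unitCounit K H) k' a = 0) ∧
    (∃ e : H →ₗ[K] H,
      (∀ a : H, ∃ N : ℕ, ∀ n ≥ N,
        e a = ∑ k ∈ Finset.Icc 1 n,
          (algebraMap ℚ K ((-1 : ℚ) ^ (k - 1) / (k : ℚ))) •
            convPow K H (LinearMap.id - unitCounit K H) k a) ∧
      (∀ a : H, ∃ N : ℕ, ∀ n ≥ N,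
        a = ∑ k ∈ Finset.range (n + 1),
          (algebraMap ℚ K (1 / (Nat.factorial k : ℚ))) • convPow K H e k a)) := by
  set T : WithConv (H →ₗ[K] H) := toConv LinearMap.id - 1
  set I := vanishingIdeal 𝒜 hcomul
  have hT : T ∈ I 1 := id_sub_one_mem_vanishingIdeal hcomul hconnected
  have hdeg := exists_forall_mem_vanishingIdeal_apply_eq_zero hcomul
    hinternal.submodule_iSup_eq_top
  obtain ⟨e, he⟩ := hinternal.exists_linearMap_eq fun q => (aeval T (truncLog q)).ofConv
  have he_log := sub_aeval_truncLog_mem_vanishingIdeal hcomul hT he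
  refine ⟨fun a => ?_, e, fun a => ?_, fun a => ?_⟩ <;> obtain ⟨p, hp⟩ := hdeg a
  · refine ⟨p + 1, by omega, fun k hk => ?_⟩
    rw [convPow_eq_ofConv_pow]
    exact hp _ (vanishingIdeal_antitone hcomul (by omega) (pow_mem_vanishingIdeal hcomul hT k))
  · refine ⟨p, fun n hn => ?_⟩
    have h := hp _ (vanishingIdeal_antitone hcomul (by omega) (he_log n))
    rw [ofConv_sub, LinearMap.sub_apply, sub_eq_zero] at h
    exact h.trans (aeval_sum_C_mul_X_pow_apply T _ _ a)
  · refine ⟨p, fun n hn => ?_⟩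
    have h := hp _ (vanishingIdeal_antitone hcomul (by omega)
      ((I (p + 1)).aeval_truncExp_sub_one_add_mem le_rfl hn (pow_mem_vanishingIdeal hcomul hT _)
        (he_log p)))
    rw [add_sub_cancel, ofConv_sub, LinearMap.sub_apply, sub_eq_zero] at h
    exact h.symm.trans (aeval_sum_C_mul_X_pow_apply (toConv e) _ _ a)

/-- in a graded connected bialgebra `H` over a ℚ-algebra `K`, the map
`id − η∘ε` is `*`-nilpotent pointwise; hence the Eulerian idempotent
`𝔢 = Σ_{k≥1} ((−1)^{k−1}/k)(id − η∘ε)^{*k}` is a well-defined linear endomorphism of `H`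
(its defining series is pointwise eventually constant), and `exp^*(𝔢) = id`, i.e.
`Σ_{k≥0} 𝔢^{*k}/k! = id` (again with pointwise eventually constant partial sums). -/
theorem eulerian_idempotent_exists {K H : Type*} [CommRing K] [Algebra ℚ K]
    [Ring H] [Bialgebra K H]
    (𝒜 : ℕ → Submodule K H)
    (hinternal : DirectSum.IsInternal 𝒜)
    (hconnected : 𝒜 0 = (1 : Submodule K H))
    (hmul : ∀ i j, 𝒜 i * 𝒜 j ≤ 𝒜 (i + j))
    (hcomul : ∀ n, ∀ x ∈ 𝒜 n,
      (Coalgebra.comul : H →ₗ[K] H ⊗[K] H) x ∈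
        ⨆ (p : ℕ × ℕ) (_ : p.1 + p.2 = n),
          LinearMap.range (TensorProduct.map (𝒜 p.1).subtype (𝒜 p.2).subtype)) :
    (∀ a : H, ∃ k : ℕ, 1 ≤ k ∧ ∀ k' ≥ k,
        convPow K H (LinearMap.id - unitCounit K H) k' a = 0) ∧
    (∃ e : H →ₗ[K] H,
      (∀ a : H, ∃ N : ℕ, ∀ n ≥ N,
        e a = ∑ k ∈ Finset.Icc 1 n,
          (algebraMap ℚ K ((-1 : ℚ) ^ (k - 1) / (k : ℚ))) •
            convPow K H (LinearMap.id - unitCounit K H) k a) ∧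
      (∀ a : H, ∃ N : ℕ, ∀ n ≥ N,
        a = ∑ k ∈ Finset.range (n + 1),
          (algebraMap ℚ K (1 / (Nat.factorial k : ℚ))) • convPow K H e k a)) :=
  eulerian_idempotent_exists_general 𝒜 hinternal hconnected hcomul
end

section
/- Over a commutative ℚ-algebra K, the Hoffman exponential Φ := E_{e^t−1} (the evaluation operator at the series e^t − 1, i.e., Φ(u₁⋯u_n) = Σ_{I ∈ C(n)} (1/I!)(u₁⋯u_n)_I with I! = I₁!⋯I_{len(I)}!) is a linear automorphism of the free K-module on words over a commutative monoid alphabet, with inverse Φ^{-1} = E_{log(1+t)} given by Φ^{-1}(u₁⋯u_n) = Σ_{I ∈ C(n)} ((−1)^{n−len(I)}/(I₁⋯I_{len(I)})) (u₁⋯u_n)_I. -/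
/-- The two-parameter-paper's (one-axis) Hoffman exponential `Φ = E_{e^t−1}`:
`Φ(u₁⋯u_n) = Σ_{I ∈ C(n)} (1/I!) (u₁⋯u_n)_I`, where `(u₁⋯u_n)_I` merges consecutive
blocks of letters of sizes `I₁,…,I_{len I}` using the commutative monoid operation. -/
noncomputable def hoffmanExp (K M : Type*) [CommRing K] [Algebra ℚ K] [CommMonoid M] :
    ((List M) →₀ K) →ₗ[K] ((List M) →₀ K) :=
  (Finsupp.lift ((List M) →₀ K) K (List M)) fun w =>
    ∑ I : Composition w.length,
      (algebraMap ℚ K ((∏ s : Fin I.length, (Nat.factorial (I.blocksFun s) : ℚ))⁻¹)) •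
        Finsupp.single ((w.splitWrtComposition I).map List.prod) (1 : K)

/-- The Hoffman logarithm `E_{log(1+t)}`:
`u₁⋯u_n ↦ Σ_{I ∈ C(n)} ((−1)^{n−len(I)}/(I₁⋯I_{len I})) (u₁⋯u_n)_I`. -/
noncomputable def hoffmanLog (K M : Type*) [CommRing K] [Algebra ℚ K] [CommMonoid M] :
    ((List M) →₀ K) →ₗ[K] ((List M) →₀ K) :=
  (Finsupp.lift ((List M) →₀ K) K (List M)) fun w =>
    ∑ I : Composition w.length,
      (algebraMap ℚ K
          ((-1 : ℚ) ^ (w.length - I.length) *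
            (∏ s : Fin I.length, (I.blocksFun s : ℚ))⁻¹)) •
        Finsupp.single ((w.splitWrtComposition I).map List.prod) (1 : K)

/-! Write `E_c` for the evaluation operator attached to a coefficient sequence `c`. Merging a word
along `I` and then along `J` is merging it along `I.gather J`; regrouping the pairs `(I, J)` through
`Composition.sigmaEquivSigmaPi` gives `E_a ∘ E_b = E_{a ∘ b}`, where `a ∘ b` is the coefficient
sequence of the composite power series. By uniqueness of power series expansions, the real identities
`exp (log y) = y` near `1` and `log (exp x) = x` near `0` say that `exp ∘ log` and `log ∘ exp` have
the coefficients of `t`, and `E_c` only depends on `c` at positive integers. -/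

open Filter Topology FormalMultilinearSeries

namespace List

variable {α β : Type*}

theorem splitWrtCompositionAux_map (f : α → β) (l : List α) (ns : List ℕ) :
    (l.map f).splitWrtCompositionAux ns = (l.splitWrtCompositionAux ns).map (map f) := by
  induction ns generalizing l with
  | nil => rfl
  | cons n ns ih => simp [splitWrtCompositionAux_cons, ← map_drop, ih]

theorem splitWrtComposition_map (f : α → β) (l : List α) {n : ℕ} (c : Composition n) :
    (l.map f).splitWrtComposition c = (l.splitWrtComposition c).map (map f) :=
  splitWrtCompositionAux_map f l c.blocks

theorem splitWrtComposition_gather (l : List α) (I : Composition l.length)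
    (J : Composition I.length) :
    l.splitWrtComposition (I.gather J) =
      ((l.splitWrtComposition I).splitWrtComposition J).map flatten := by
  have hJ : ((l.splitWrtComposition I).splitWrtComposition J).flatten = l.splitWrtComposition I :=
    flatten_splitWrtCompositionAux (by simp [J.blocks_sum])
  rw [eq_iff_flatten_eq, flatten_splitWrtComposition, map_length_splitWrtComposition,
    ← flatten_flatten, hJ, flatten_splitWrtComposition]
  refine ⟨rfl, ?_⟩
  show (I.blocks.splitWrtComposition J).map sum = _
  rw [← map_length_splitWrtComposition l I, splitWrtComposition_map]
  simp [Function.comp_def, length_flatten]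

variable {M : Type*} [Monoid M]

/-- The word `(u₁⋯uₙ)_I` of the paper. -/
def mergeBlocks (w : List M) {n : ℕ} (I : Composition n) : List M :=
  (w.splitWrtComposition I).map prod

@[simp]
theorem length_mergeBlocks (w : List M) {n : ℕ} (I : Composition n) :
    (w.mergeBlocks I).length = I.length := by
  simp [mergeBlocks]

theorem mergeBlocks_mergeBlocks (w : List M) (I : Composition w.length)
    (J : Composition I.length) :
    (w.mergeBlocks I).mergeBlocks J = w.mergeBlocks (I.gather J) := by
  simp [mergeBlocks, splitWrtComposition_map, splitWrtComposition_gather, prod_flatten,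
    Function.comp_def]

theorem mergeBlocks_ones (w : List M) : w.mergeBlocks (Composition.ones w.length) = w := by
  have h : w.splitWrtComposition (Composition.ones w.length) = w.map ([·]) := by
    rw [eq_iff_flatten_eq]
    simp [map_length_splitWrtComposition, Function.comp_def, ← flatMap_def]
  simp [mergeBlocks, h, Function.comp_def]

end List

namespace Composition

variable {R : Type*} [CommMonoid R] {n : ℕ}

theorem prod_blocksFun_eq_prod_map_blocks (I : Composition n) (f : ℕ → R) :
    ∏ i, f (I.blocksFun i) = (I.blocks.map f).prod := by
  conv_rhs => rw [← ofFn_blocksFun I]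
  rw [List.map_ofFn, List.prod_ofFn]
  rfl

theorem gather_sigmaEquivSigmaPi_symm
    (x : Σ C : Composition n, ∀ i : Fin C.length, Composition (C.blocksFun i)) :
    ((sigmaEquivSigmaPi n).symm x).1.gather ((sigmaEquivSigmaPi n).symm x).2 = x.1 :=
  congrArg Sigma.fst ((sigmaEquivSigmaPi n).apply_symm_apply x)

theorem prod_sigmaEquivSigmaPi_symm (a b : ℕ → R)
    (x : Σ C : Composition n, ∀ i : Fin C.length, Composition (C.blocksFun i)) :
    (∏ k, b (((sigmaEquivSigmaPi n).symm x).1.blocksFun k)) *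
        ∏ j, a (((sigmaEquivSigmaPi n).symm x).2.blocksFun j) =
      ∏ i, a (x.2 i).length * ∏ k, b ((x.2 i).blocksFun k) := by
  simp only [prod_blocksFun_eq_prod_map_blocks, Finset.prod_mul_distrib]
  rw [mul_comm]
  show ((List.ofFn fun i => (x.2 i).length).map a).prod *
    ((List.ofFn fun i => (x.2 i).blocks).flatten.map b).prod = _
  simp [List.map_flatten, List.prod_flatten, List.prod_ofFn, Function.comp_def]

theorem prod_neg_neg_one_pow {S : Type*} [CommRing S] (I : Composition n) :
    ∏ i, -(-1 : S) ^ I.blocksFun i = (-1) ^ (n - I.length) := by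
  simp only [neg_eq_neg_one_mul ((-1 : S) ^ _), Finset.prod_mul_distrib,
    Finset.prod_pow_eq_pow_sum, I.sum_blocksFun, Finset.prod_const, Finset.card_univ,
    Fintype.card_fin, ← pow_add]
  rw [show I.length + n = n - I.length + 2 * I.length by have := I.length_le; omega, pow_add,
    pow_mul, neg_one_sq, one_pow, mul_one]

end Composition

/-- The `n`-th coefficient of the composite power series `(∑ aₖ tᵏ) ∘ (∑ bₖ tᵏ)`. -/
def coeffComp {R : Type*} [CommSemiring R] (a b : ℕ → R) (n : ℕ) : R :=
  ∑ I : Composition n, a I.length * ∏ i, b (I.blocksFun i)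

theorem map_coeffComp {R S : Type*} [CommSemiring R] [CommSemiring S] (φ : R →+* S)
    (a b : ℕ → R) (n : ℕ) :
    φ (coeffComp a b n) = coeffComp (fun k => φ (a k)) (fun k => φ (b k)) n := by
  simp [coeffComp, map_sum, map_prod]

section HoffmanEval

variable (K M : Type*) [CommSemiring K] [Monoid M]

/-- The operator `E_f` of the paper, for `f = ∑ c k tᵏ`. -/
noncomputable def hoffmanEval (c : ℕ → K) : (List M →₀ K) →ₗ[K] (List M →₀ K) :=
  Finsupp.lift (List M →₀ K) K (List M) fun w =>
    ∑ I : Composition w.length, (∏ i, c (I.blocksFun i)) • Finsupp.single (w.mergeBlocks I) 1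

variable {K M}

theorem hoffmanEval_single {c : ℕ → K} {n : ℕ} {w : List M} (hw : w.length = n) :
    hoffmanEval K M c (Finsupp.single w 1) =
      ∑ I : Composition n, (∏ i, c (I.blocksFun i)) • Finsupp.single (w.mergeBlocks I) 1 := by
  subst hw
  simp [hoffmanEval]

theorem hoffmanEval_comp (a b : ℕ → K) :
    hoffmanEval K M a ∘ₗ hoffmanEval K M b = hoffmanEval K M (coeffComp a b) := by
  refine Finsupp.lhom_ext' fun w => LinearMap.ext_ring ?_
  have inner (I : Composition w.length) :
      hoffmanEval K M a (Finsupp.single (w.mergeBlocks I) 1) = ∑ J : Composition I.length,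
        (∏ j, a (J.blocksFun j)) • Finsupp.single (w.mergeBlocks (I.gather J)) 1 := by
    simp only [hoffmanEval_single (w.length_mergeBlocks I), List.mergeBlocks_mergeBlocks]
  simp only [LinearMap.comp_apply, Finsupp.lsingle_apply]
  rw [hoffmanEval_single rfl, hoffmanEval_single rfl]
  simp only [map_sum, map_smul, inner, Finset.smul_sum, smul_smul]
  rw [Finset.sum_sigma', Finset.univ_sigma_univ,
    ← Equiv.sum_comp (Composition.sigmaEquivSigmaPi w.length).symm]
  simp only [Composition.prod_sigmaEquivSigmaPi_symm, Composition.gather_sigmaEquivSigmaPi_symm]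
  rw [← Finset.univ_sigma_univ, Finset.sum_sigma]
  refine Finset.sum_congr rfl fun C _ => ?_
  simp only [coeffComp, Fintype.prod_sum, Finset.sum_smul]

theorem hoffmanEval_eq_id {c : ℕ → K} (hc : ∀ n, n ≠ 0 → c n = if n = 1 then 1 else 0) :
    hoffmanEval K M c = LinearMap.id := by
  refine Finsupp.lhom_ext' fun w => LinearMap.ext_ring ?_
  simp only [LinearMap.comp_apply, Finsupp.lsingle_apply, hoffmanEval_single rfl,
    LinearMap.id_apply]
  rw [Finset.sum_eq_single (Composition.ones w.length)]
  · simp [hc, List.mergeBlocks_ones]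
  · intro I _ hI
    obtain ⟨b, hb, hb1⟩ := Composition.ne_ones_iff.mp hI
    rw [Composition.prod_blocksFun_eq_prod_map_blocks,
      List.prod_eq_zero (List.mem_map.2 ⟨b, hb, ?_⟩), zero_smul]
    rw [hc b (by omega), if_neg (by omega)]
  · simp

theorem hoffmanEval_comp_eq_id_of_coeffComp [Algebra ℚ K] {a b : ℕ → ℚ}
    (h : ∀ n, n ≠ 0 → coeffComp a b n = if n = 1 then 1 else 0) :
    hoffmanEval K M (fun n => algebraMap ℚ K (a n)) ∘ₗ
        hoffmanEval K M (fun n => algebraMap ℚ K (b n)) = LinearMap.id := by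
  rw [hoffmanEval_comp]
  refine hoffmanEval_eq_id fun n hn => ?_
  rw [← map_coeffComp, h n hn, apply_ite (algebraMap ℚ K), map_one, map_zero]

end HoffmanEval

section Analytic

variable {𝕜 : Type*} [NontriviallyNormedField 𝕜]

theorem coeff_ofScalars_comp_ofScalars (a b : ℕ → 𝕜) (n : ℕ) :
    ((ofScalars 𝕜 a).comp (ofScalars 𝕜 b)).coeff n = coeffComp a b n := by
  rw [FormalMultilinearSeries.coeff, FormalMultilinearSeries.comp, sum_apply]
  refine Finset.sum_congr rfl fun I _ => ?_
  simp only [compAlongComposition_apply, applyComposition,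
    apply_eq_prod_smul_coeff (p := ofScalars 𝕜 _), coeff_ofScalars, Pi.one_apply,
    Finset.prod_const_one, Function.comp_apply, smul_eq_mul, mul_one, mul_comm]

theorem coeffComp_eq_of_leftInverse {a b : ℕ → 𝕜} {f g : 𝕜 → 𝕜} {x : 𝕜}
    (hg : HasFPowerSeriesAt g (ofScalars 𝕜 a) (f x)) (hf : HasFPowerSeriesAt f (ofScalars 𝕜 b) x)
    (hgf : ∀ᶠ y in 𝓝 x, g (f y) = y) {n : ℕ} (hn : n ≠ 0) :
    coeffComp a b n = if n = 1 then 1 else 0 := by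
  have h := (hg.comp hf).eq_formalMultilinearSeries_of_eventually
    ((ContinuousLinearMap.id 𝕜 𝕜).hasFPowerSeriesAt x) hgf
  rw [← coeff_ofScalars_comp_ofScalars, h]
  rcases n with _ | _ | n
  · exact absurd rfl hn
  · simp [FormalMultilinearSeries.coeff]
  · simp [FormalMultilinearSeries.coeff]

end Analytic

def expCoeff (n : ℕ) : ℚ := (n.factorial : ℚ)⁻¹

def logCoeff (n : ℕ) : ℚ := -(-1) ^ n / n

theorem hasFPowerSeriesAt_exp_expCoeff :
    HasFPowerSeriesAt Real.exp (ofScalars ℝ fun n => (expCoeff n : ℝ)) 0 := by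
  have h := NormedSpace.exp_hasFPowerSeriesAt_zero (𝕂 := ℝ) (𝔸 := ℝ)
  rw [NormedSpace.expSeries_eq_ofScalars, ← Real.exp_eq_exp_ℝ] at h
  simpa [expCoeff] using h

theorem hasFPowerSeriesAt_log_logCoeff :
    HasFPowerSeriesAt Real.log (ofScalars ℝ fun n => (logCoeff n : ℝ)) 1 := by
  convert hasFPowerSeriesAt_log_one using 3
  simp [logCoeff]

theorem coeffComp_expCoeff_logCoeff {n : ℕ} (hn : n ≠ 0) :
    coeffComp expCoeff logCoeff n = if n = 1 then 1 else 0 := by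
  apply Rat.cast_injective (α := ℝ)
  have hexp_log : ∀ᶠ y in 𝓝 (1 : ℝ), Real.exp (Real.log y) = y := by
    filter_upwards [lt_mem_nhds one_pos] with y hy using Real.exp_log hy
  have := coeffComp_eq_of_leftInverse (Real.log_one ▸ hasFPowerSeriesAt_exp_expCoeff)
    hasFPowerSeriesAt_log_logCoeff hexp_log hn
  rw [← Rat.coe_castHom, map_coeffComp]
  simpa [apply_ite] using this

theorem coeffComp_logCoeff_expCoeff {n : ℕ} (hn : n ≠ 0) :
    coeffComp logCoeff expCoeff n = if n = 1 then 1 else 0 := by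
  apply Rat.cast_injective (α := ℝ)
  have := coeffComp_eq_of_leftInverse (Real.exp_zero ▸ hasFPowerSeriesAt_log_logCoeff)
    hasFPowerSeriesAt_exp_expCoeff (Eventually.of_forall Real.log_exp) hn
  rw [← Rat.coe_castHom, map_coeffComp]
  simpa [apply_ite] using this

section

variable (K M : Type*) [CommRing K] [Algebra ℚ K] [CommMonoid M]

theorem hoffmanExp_eq :
    hoffmanExp K M = hoffmanEval K M (fun n => algebraMap ℚ K (expCoeff n)) := by
  simp only [hoffmanExp, hoffmanEval, List.mergeBlocks]
  congr! with w I
  rw [← map_prod, ← Finset.prod_inv_distrib]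
  rfl

theorem hoffmanLog_eq :
    hoffmanLog K M = hoffmanEval K M (fun n => algebraMap ℚ K (logCoeff n)) := by
  simp only [hoffmanLog, hoffmanEval, List.mergeBlocks]
  congr! with w I
  rw [← map_prod]
  simp only [logCoeff, div_eq_mul_inv, Finset.prod_mul_distrib, Finset.prod_inv_distrib,
    Composition.prod_neg_neg_one_pow]

end

/-- the Hoffman exponential `Φ = E_{e^t−1}` is a linear automorphism of the
free `K`-module on words over a commutative monoid alphabet, with inverse
`Φ⁻¹ = E_{log(1+t)}` given by the explicit formula above. -/
theorem hoffmanExp_inverse (K M : Type*) [CommRing K] [Algebra ℚ K] [CommMonoid M] :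
    Function.Bijective (hoffmanExp K M) ∧
    (hoffmanLog K M) ∘ₗ (hoffmanExp K M) = LinearMap.id ∧
    (hoffmanExp K M) ∘ₗ (hoffmanLog K M) = LinearMap.id := by
  have hLE : hoffmanLog K M ∘ₗ hoffmanExp K M = LinearMap.id := by
    rw [hoffmanLog_eq, hoffmanExp_eq]
    exact hoffmanEval_comp_eq_id_of_coeffComp fun n hn => coeffComp_logCoeff_expCoeff hn
  have hEL : hoffmanExp K M ∘ₗ hoffmanLog K M = LinearMap.id := by
    rw [hoffmanLog_eq, hoffmanExp_eq]
    exact hoffmanEval_comp_eq_id_of_coeffComp fun n hn => coeffComp_expCoeff_logCoeff hn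
  exact ⟨Function.bijective_iff_has_inverse.mpr
    ⟨hoffmanLog K M, LinearMap.congr_fun hLE, LinearMap.congr_fun hEL⟩, hLE, hEL⟩
end
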